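/- arXiv:1108.5009 — 5 statements merged into one kernel-verified Lean document; each statement's English description precedes it below -/
import Mathlib

section
/- Let G be a graph with an edge uv where deg(u)=2 and deg(v) ≤ M−1 for some integer M ≥ 5 with Δ(G) ≤ M. If G−uv admits an (M+1)-total coloring, then G admits an (M+1)-total coloring. -/
open SimpleGraph

/-- Two chords of a circle (vertices placed at positions `p`) cross iff their
endpoints interleave along the circle. -/
def CrossChords {V : Type*} (p : V → ℝ) (e f : Sym2 V) : Prop :=
  ∃ a b c d : V, ((e = s(a, c) ∧ f = s(b, d)) ∨ (e = s(b, d) ∧ f = s(a, c))) ∧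
    p a < p b ∧ p b < p c ∧ p c < p d

/-- A pseudo-outerplanar drawing: vertices on a circle (encoded by an injective
position function), edges as chords inside the disk, each edge crossed by at most
one other edge. -/
def HasPOPDrawing {V : Type*} (G : SimpleGraph V) : Prop :=
  ∃ p : V → ℝ, Function.Injective p ∧
    ∀ e ∈ G.edgeSet, {f | f ∈ G.edgeSet ∧ f ≠ e ∧ CrossChords p e f}.Subsingleton

/-- A block of `G`: a maximal connected set of vertices whose induced subgraph
has no cutvertex. -/
def IsBlock {V : Type*} (G : SimpleGraph V) (B : Set V) : Prop :=
  B.Nonempty ∧ (G.induce B).Connected ∧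
    (∀ v ∈ B, (G.induce (B \ {v})).Preconnected) ∧
    ∀ B' : Set V, B ⊆ B' → (G.induce B').Connected →
      (∀ v ∈ B', (G.induce (B' \ {v})).Preconnected) → B' = B

/-- A graph is pseudo-outerplanar if each of its blocks has a pseudo-outerplanar
drawing. -/
def PseudoOuterplanar {V : Type*} (G : SimpleGraph V) : Prop :=
  ∀ B : Set V, IsBlock G B → HasPOPDrawing (G.induce B)

/-- A (proper) total coloring with `k` colors: adjacent vertices differ,
incident edges differ, and every vertex differs from its incident edges. -/
def IsTotalColoring {V : Type*} (G : SimpleGraph V) (k : ℕ)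
    (cv : V → Fin k) (ce : Sym2 V → Fin k) : Prop :=
  (∀ ⦃u v⦄, G.Adj u v → cv u ≠ cv v) ∧
  (∀ e f, e ∈ G.edgeSet → f ∈ G.edgeSet → e ≠ f → (∃ w, w ∈ e ∧ w ∈ f) → ce e ≠ ce f) ∧
  (∀ v e, e ∈ G.edgeSet → v ∈ e → cv v ≠ ce e)

/-- `G` admits a `k`-total coloring. -/
def HasTotalColoring {V : Type*} (G : SimpleGraph V) (k : ℕ) : Prop :=
  ∃ cv ce, IsTotalColoring G k cv ce

/-- The total chromatic number. -/
noncomputable def totalChromaticNumber {V : Type*} (G : SimpleGraph V) : ℕ :=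
  sInf {k | HasTotalColoring G k}

/-!
Colour the new edge `uv` first, ignoring the colour of `u`: it must avoid `cv v` and the colours
of the other edges at `u` and `v`, at most `deg u + deg v - 1` colours. Only then recolour `u`, avoiding its `deg u`
neighbours and `deg u` incident edges (now including `uv`). When `deg u = 2` and
`deg v ≤ M - 1`, both counts stay below `M + 1`.
-/

theorem Fin.exists_notMem_of_card_lt {k : ℕ} (S : Finset (Fin k)) (hS : S.card < k) :
    ∃ c, c ∉ S := by
  obtain ⟨c, -, hc⟩ := Finset.exists_mem_notMem_of_card_lt_card
    (s := S) (t := Finset.univ) (by rwa [Finset.card_univ, Fintype.card_fin])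
  exact ⟨c, hc⟩

namespace IsTotalColoring

variable {V : Type*} [DecidableEq V] {G : SimpleGraph V} {k : ℕ} {cv : V → Fin k}
  {ce : Sym2 V → Fin k}

theorem update_vertex (hc : IsTotalColoring G k cv ce) {x : V} {d : Fin k}
    (hnbr : ∀ y, G.Adj x y → cv y ≠ d) (hedge : ∀ e ∈ G.edgeSet, x ∈ e → ce e ≠ d) :
    IsTotalColoring G k (Function.update cv x d) ce := by
  obtain ⟨hcv, hce, hve⟩ := hc
  refine ⟨fun y z hyz => ?_, hce, fun y e he hye => ?_⟩
  · rcases eq_or_ne y x with rfl | hy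
    · rw [Function.update_self, Function.update_of_ne hyz.ne.symm]
      exact (hnbr z hyz).symm
    rcases eq_or_ne z x with rfl | hz
    · rw [Function.update_self, Function.update_of_ne hy]
      exact hnbr y hyz.symm
    rw [Function.update_of_ne hy, Function.update_of_ne hz]
    exact hcv hyz
  · rcases eq_or_ne y x with rfl | hy
    · rw [Function.update_self]
      exact (hedge e he hye).symm
    rw [Function.update_of_ne hy]
    exact hve y e he hye

theorem sup_edge {u v : V} (hc : IsTotalColoring (G.deleteEdges {s(u, v)}) k cv ce)
    (huv : G.Adj u v) (hcuv : cv u ≠ cv v) {c : Fin k} (hcu : cv u ≠ c) (hcv : cv v ≠ c)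
    (hedge : ∀ e ∈ (G.deleteEdges {s(u, v)}).edgeSet, (u ∈ e ∨ v ∈ e) → ce e ≠ c) :
    IsTotalColoring G k cv (Function.update ce s(u, v) c) := by
  obtain ⟨hcv', hce, hve⟩ := hc
  have hmem : ∀ e ∈ G.edgeSet, e ≠ s(u, v) → e ∈ (G.deleteEdges {s(u, v)}).edgeSet :=
    fun e he hne => by simpa [edgeSet_deleteEdges] using And.intro he hne
  refine ⟨fun x y hxy => ?_, fun e f he hf hef hw => ?_, fun x e he hxe => ?_⟩
  · by_cases hxy' : s(x, y) = s(u, v)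
    · rcases Sym2.eq_iff.1 hxy' with ⟨rfl, rfl⟩ | ⟨rfl, rfl⟩
      · exact hcuv
      · exact hcuv.symm
    exact hcv' (by simpa using And.intro hxy hxy')
  · obtain ⟨w, hwe, hwf⟩ := hw
    rcases eq_or_ne e s(u, v) with rfl | he'
    · rw [Function.update_self, Function.update_of_ne (Ne.symm hef)]
      refine (hedge f (hmem f hf (Ne.symm hef)) ?_).symm
      rcases Sym2.mem_iff.1 hwe with rfl | rfl
      exacts [Or.inl hwf, Or.inr hwf]
    rcases eq_or_ne f s(u, v) with rfl | hf'
    · rw [Function.update_self, Function.update_of_ne he']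
      refine hedge e (hmem e he he') ?_
      rcases Sym2.mem_iff.1 hwf with rfl | rfl
      exacts [Or.inl hwe, Or.inr hwe]
    rw [Function.update_of_ne he', Function.update_of_ne hf']
    exact hce e f (hmem e he he') (hmem f hf hf') hef ⟨w, hwe, hwf⟩
  · rcases eq_or_ne e s(u, v) with rfl | he'
    · rw [Function.update_self]
      rcases Sym2.mem_iff.1 hxe with rfl | rfl
      exacts [hcu, hcv]
    rw [Function.update_of_ne he']
    exact hve x e (hmem e he he') hxe

end IsTotalColoring

theorem HasTotalColoring.of_deleteEdges {V : Type*} [Fintype V] {G : SimpleGraph V}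
    [DecidableRel G.Adj] {u v : V} {k : ℕ} (huv : G.Adj u v)
    (hk : G.degree u + G.degree v ≤ k) (hku : 2 * G.degree u < k)
    (h : HasTotalColoring (G.deleteEdges {s(u, v)}) k) : HasTotalColoring G k := by
  classical
  obtain ⟨cv, ce, hc⟩ := h
  have huvE : s(u, v) ∈ G.edgeSet := huv
  have hmem_erase : ∀ {x} e, e ∈ (G.deleteEdges {s(u, v)}).edgeSet → x ∈ e →
      e ∈ (G.incidenceFinset x).erase s(u, v) := fun e he hx => by
    simp only [edgeSet_deleteEdges, Set.mem_sdiff, Set.mem_singleton_iff] at he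
    simpa [mem_incidenceFinset, incidenceSet, he.2] using And.intro he.1 hx
  have hcard : ∀ x, s(u, v) ∈ G.incidenceSet x →
      ((G.incidenceFinset x).erase s(u, v)).card = G.degree x - 1 := fun x hx => by
    rw [Finset.card_erase_of_mem ((mem_incidenceFinset _ _ _).2 hx),
      card_incidenceFinset_eq_degree]
  have hdu := hcard u ⟨huvE, Sym2.mem_mk_left u v⟩
  have hdv := hcard v ⟨huvE, Sym2.mem_mk_right u v⟩
  have hpos_u := G.degree_pos_iff_exists_adj u |>.2 ⟨v, huv⟩
  have hpos_v := G.degree_pos_iff_exists_adj v |>.2 ⟨u, huv.symm⟩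
  obtain ⟨c, hcFree⟩ := Fin.exists_notMem_of_card_lt (insert (cv v)
    (((G.incidenceFinset u).erase s(u, v) ∪ (G.incidenceFinset v).erase s(u, v)).image ce)) (by
      grw [Finset.card_insert_le, Finset.card_image_le, Finset.card_union_le, hdu, hdv]
      omega)
  obtain ⟨d, hdFree⟩ := Fin.exists_notMem_of_card_lt (insert c
    ((G.neighborFinset u).image cv ∪ ((G.incidenceFinset u).erase s(u, v)).image ce)) (by
      grw [Finset.card_insert_le, Finset.card_union_le, Finset.card_image_le,
        Finset.card_image_le, hdu, card_neighborFinset_eq_degree]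
      omega)
  simp only [Finset.mem_insert, Finset.mem_union, Finset.mem_image, not_or, not_exists,
    not_and] at hcFree hdFree
  have hrecolor := hc.update_vertex (x := u) (d := d)
    (fun y hy => hdFree.2.1 y ((mem_neighborFinset _ _ _).2 hy.1))
    (fun e he hue => hdFree.2.2 e (hmem_erase e he hue))
  refine ⟨_, _, hrecolor.sup_edge (c := c) huv ?_ ?_ ?_ ?_⟩
  · rw [Function.update_self, Function.update_of_ne huv.ne.symm]
    exact fun h => hdFree.2.1 v ((mem_neighborFinset _ _ _).2 huv) h.symm
  · rw [Function.update_self]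
    exact hdFree.1
  · rw [Function.update_of_ne huv.ne.symm]
    exact fun h => hcFree.1 h.symm
  · rintro e he (hue | hve)
    exacts [hcFree.2 e (Or.inl (hmem_erase e he hue)),
      hcFree.2 e (Or.inr (hmem_erase e he hve))]

theorem stmt_2_general {V : Type*} [Fintype V] (G : SimpleGraph V) [DecidableRel G.Adj]
    (u v : V) (M : ℕ) (hM : 5 ≤ M)
    (huv : G.Adj u v) (hdu : G.degree u = 2) (hdv : G.degree v ≤ M - 1)
    (h : HasTotalColoring (G.deleteEdges {s(u, v)}) (M + 1)) :
    HasTotalColoring G (M + 1) :=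
  h.of_deleteEdges huv (by omega) (by omega)

theorem stmt_2 {V : Type*} [Fintype V] (G : SimpleGraph V) [DecidableRel G.Adj]
    (u v : V) (M : ℕ) (hM : 5 ≤ M) (hDelta : G.maxDegree ≤ M)
    (huv : G.Adj u v) (hdu : G.degree u = 2) (hdv : G.degree v ≤ M - 1)
    (h : HasTotalColoring (G.deleteEdges {s(u, v)}) (M + 1)) :
    HasTotalColoring G (M + 1) :=
  stmt_2_general G u v M hM huv hdu hdv h
end

section
/- Let M ≥ 5 and let G be a graph with Δ(G) ≤ M containing a 4-cycle u,x,v,y with deg(u)=deg(v)=2 (u adjacent to x and y, v adjacent to x and y, and these are all neighbors of u and v). If G−{u,v} admits an (M+1)-total coloring, then G admits an (M+1)-total coloring. -/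
open SimpleGraph

/-
In `G - {u, v}` the vertex `x` sees at most `M - 1` colors: its own and those of at most `M - 2`
edges. So at least two colors are free at `x` for the edges `ux`, `vx`, and likewise at `y` for
`uy`, `vy`; from two such pairs one can always pick colors that also differ at `u` and at `v`.
The vertices `u` and `v` are not adjacent, so each of them only has to avoid the colors of its two
edges and of `x` and `y`, and `M + 1 > 4` colors leave one free.
-/

open Set

theorem Set.Nontrivial.exists_four_cycle_coloring {α : Type*} {A B : Set α} (hA : A.Nontrivial)
    (hB : B.Nontrivial) :
    ∃ a ∈ A, ∃ b ∈ A, ∃ c ∈ B, ∃ d ∈ B, a ≠ b ∧ c ≠ d ∧ a ≠ c ∧ b ≠ d := by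
  obtain ⟨a, ha, b, hb, hab⟩ := hA
  by_cases haB : a ∈ B
  · obtain ⟨c, hc, hca⟩ := hB.exists_ne a
    exact ⟨a, ha, b, hb, c, hc, a, haB, hab, hca, hca.symm, hab.symm⟩
  · obtain ⟨d, hd, hdb⟩ := hB.exists_ne b
    obtain ⟨c, hc, hcd⟩ := hB.exists_ne d
    exact ⟨a, ha, b, hb, c, hc, d, hd, hab, hcd, fun h => haB (h ▸ hc), hdb.symm⟩

theorem Fin.exists_notMem_quadruple {k : ℕ} (hk : 4 < k) (a b c d : Fin k) :
    ∃ p, p ∉ ({a, b, c, d} : Finset (Fin k)) := by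
  obtain ⟨p, -, hp⟩ := Finset.exists_mem_notMem_of_card_lt_card (t := Finset.univ)
    (s := {a, b, c, d})
    (Finset.card_le_four.trans_lt (by rwa [Finset.card_univ, Fintype.card_fin]))
  exact ⟨p, hp⟩

section TotalColoring

variable {V : Type*} [DecidableEq V] {k : ℕ}

def starColor (cv : V → Fin k) (ce : Sym2 V → Fin k) (w z : V) : Fin k :=
  if z = w then cv w else ce s(w, z)

theorem isTotalColoring_iff_injOn_starColor {G : SimpleGraph V} {cv : V → Fin k}
    {ce : Sym2 V → Fin k} :
    IsTotalColoring G k cv ce ↔ (∀ ⦃p q⦄, G.Adj p q → cv p ≠ cv q) ∧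
      ∀ w, InjOn (starColor cv ce w) (insert w (G.neighborSet w)) := by
  constructor
  · rintro ⟨hadj, hedge, hinc⟩
    refine ⟨hadj, fun w z₁ hz₁ z₂ hz₂ heq => ?_⟩
    rcases hz₁ with rfl | hz₁ <;> rcases hz₂ with rfl | hz₂
    · rfl
    · rw [starColor, starColor, if_pos rfl, if_neg (G.ne_of_adj hz₂).symm] at heq
      exact absurd heq (hinc _ _ hz₂ (Sym2.mem_mk_left _ _))
    · rw [starColor, starColor, if_pos rfl, if_neg (G.ne_of_adj hz₁).symm] at heq
      exact absurd heq.symm (hinc _ _ hz₁ (Sym2.mem_mk_left _ _))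
    · rw [starColor, starColor, if_neg (G.ne_of_adj hz₁).symm,
        if_neg (G.ne_of_adj hz₂).symm] at heq
      by_contra hne
      exact hedge _ _ hz₁ hz₂ (fun h => hne (Sym2.congr_right.mp h))
        ⟨w, Sym2.mem_mk_left _ _, Sym2.mem_mk_left _ _⟩ heq
  · rintro ⟨hadj, hinj⟩
    refine ⟨hadj, ?_, ?_⟩
    · rintro e f he hf hef ⟨w, hwe, hwf⟩ heq
      obtain ⟨z₁, rfl⟩ := Sym2.mem_iff_exists.mp hwe
      obtain ⟨z₂, rfl⟩ := Sym2.mem_iff_exists.mp hwf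
      have : z₁ = z₂ := hinj w (Or.inr he) (Or.inr hf) <| by
        rw [starColor, starColor, if_neg (G.ne_of_adj he).symm,
          if_neg (G.ne_of_adj hf).symm, heq]
      exact hef (this ▸ rfl)
    · rintro w e he hwe heq
      obtain ⟨z, rfl⟩ := Sym2.mem_iff_exists.mp hwe
      refine G.ne_of_adj he (hinj w (mem_insert w _) (Or.inr he) ?_)
      rw [starColor, starColor, if_pos rfl, if_neg (G.ne_of_adj he).symm, heq]

/-- `(cv, ce)` restricted to `S` is a total coloring of `G.induce S`, in the form of
`isTotalColoring_iff_injOn_starColor`. -/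
def IsTotalColoringOn (G : SimpleGraph V) (S : Set V) (cv : V → Fin k)
    (ce : Sym2 V → Fin k) : Prop :=
  (∀ p ∈ S, ∀ q ∈ S, G.Adj p q → cv p ≠ cv q) ∧
    ∀ w ∈ S, InjOn (starColor cv ce w) (insert w (G.neighborSet w ∩ S))

theorem IsTotalColoring.isTotalColoringOn {G : SimpleGraph V} {S : Set V} {cv₀ : S → Fin k}
    {ce₀ : Sym2 S → Fin k} (h : IsTotalColoring (G.induce S) k cv₀ ce₀) {cv : V → Fin k}
    {ce : Sym2 V → Fin k} (hcv : cv ∘ Subtype.val = cv₀) (hce : ce ∘ Sym2.map Subtype.val = ce₀) :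
    IsTotalColoringOn G S cv ce := by
  subst hcv hce
  obtain ⟨hadj, hinj⟩ := isTotalColoring_iff_injOn_starColor.mp h
  refine ⟨fun p hp q hq hpq => hadj (p := ⟨p, hp⟩) (q := ⟨q, hq⟩) hpq, fun w hw => ?_⟩
  have hstar : starColor cv ce w ∘ Subtype.val =
      starColor (cv ∘ Subtype.val) (ce ∘ Sym2.map Subtype.val) ⟨w, hw⟩ := by
    funext z
    simp [starColor, Subtype.ext_iff]
  have himage : Subtype.val '' insert ⟨w, hw⟩ ((G.induce S).neighborSet ⟨w, hw⟩) =
      insert w (G.neighborSet w ∩ S) := by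
    ext z
    constructor
    · rintro ⟨z, hz, rfl⟩
      rcases hz with rfl | hz
      · exact mem_insert _ _
      · exact Or.inr ⟨hz, z.2⟩
    · rintro (rfl | ⟨hz, hzS⟩)
      · exact ⟨⟨z, hw⟩, mem_insert _ _, rfl⟩
      · exact ⟨⟨z, hzS⟩, Or.inr hz, rfl⟩
  rw [← himage]
  exact (hstar ▸ hinj ⟨w, hw⟩).image_of_comp

theorem HasTotalColoring.exists_isTotalColoringOn [NeZero k] {G : SimpleGraph V} {S : Set V}
    (h : HasTotalColoring (G.induce S) k) :
    ∃ (cv : V → Fin k) (ce : Sym2 V → Fin k), IsTotalColoringOn G S cv ce := by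
  obtain ⟨cv₀, ce₀, h⟩ := h
  exact ⟨_, _, h.isTotalColoringOn (Function.extend_comp Subtype.val_injective cv₀ 0)
    (Function.extend_comp (Sym2.map.injective Subtype.val_injective) ce₀ 0)⟩

def starPalette (G : SimpleGraph V) (S : Set V) (cv : V → Fin k) (ce : Sym2 V → Fin k)
    (w : V) : Set (Fin k) :=
  starColor cv ce w '' insert w (G.neighborSet w ∩ S)

section Palette

variable {G : SimpleGraph V} {S : Set V} {cv cv' : V → Fin k} {ce ce' : Sym2 V → Fin k}

theorem starColor_eqOn (hcv : EqOn cv' cv S) (hce : ∀ p ∈ S, ∀ q ∈ S, ce' s(p, q) = ce s(p, q))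
    {w : V} (hw : w ∈ S) : EqOn (starColor cv' ce' w) (starColor cv ce w) S := by
  intro z hz
  by_cases hzw : z = w
  · simp only [starColor, if_pos hzw, hcv hw]
  · simp only [starColor, if_neg hzw, hce w hw z hz]

theorem IsTotalColoringOn.congr (h : IsTotalColoringOn G S cv ce) (hcv : EqOn cv' cv S)
    (hce : ∀ p ∈ S, ∀ q ∈ S, ce' s(p, q) = ce s(p, q)) : IsTotalColoringOn G S cv' ce' := by
  refine ⟨fun p hp q hq hpq => ?_, fun w hw => ?_⟩
  · rw [hcv hp, hcv hq]
    exact h.1 p hp q hq hpq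
  · exact (h.2 w hw).congr ((starColor_eqOn hcv hce hw).symm.mono
      (insert_subset hw inter_subset_right))

theorem starPalette_congr (hcv : EqOn cv' cv S)
    (hce : ∀ p ∈ S, ∀ q ∈ S, ce' s(p, q) = ce s(p, q)) {w : V} (hw : w ∈ S) :
    starPalette G S cv' ce' w = starPalette G S cv ce w :=
  ((starColor_eqOn hcv hce hw).mono (insert_subset hw inter_subset_right)).image_eq

theorem starPalette_compl_nontrivial {z u v : V} [Fintype (G.neighborSet z)] (hu : G.Adj z u)
    (hv : G.Adj z v) (huv : u ≠ v) (hk : G.degree z < k) :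
    (starPalette G {u, v}ᶜ cv ce z)ᶜ.Nontrivial := by
  have hN : (G.neighborSet z ∩ {u, v}ᶜ).ncard + 2 = G.degree z := by
    rw [← sdiff_eq, ← ncard_pair huv,
      ncard_sdiff_add_ncard_of_subset (pair_subset hu hv : {u, v} ⊆ G.neighborSet z),
      ← card_neighborSet_eq_degree, ← Nat.card_eq_fintype_card, Nat.card_coe_set_eq]
  have hpal : (starPalette G {u, v}ᶜ cv ce z).ncard + 2 ≤ k :=
    calc (starPalette G {u, v}ᶜ cv ce z).ncard + 2
        ≤ (insert z (G.neighborSet z ∩ {u, v}ᶜ)).ncard + 2 := by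
          gcongr
          exact ncard_image_le
      _ ≤ (G.neighborSet z ∩ {u, v}ᶜ).ncard + 1 + 2 := by
          gcongr
          exact ncard_insert_le _ _
      _ ≤ k := by omega
  rw [← one_lt_ncard_iff_nontrivial, ncard_compl, Nat.card_eq_fintype_card, Fintype.card_fin]
  omega

theorem injOn_starColor_of_neighborSet_eq_pair {t x y : V} (ht : G.neighborSet t = {x, y})
    (hxy : x ≠ y) (hx : cv t ≠ ce s(t, x)) (hy : cv t ≠ ce s(t, y))
    (hne : ce s(t, x) ≠ ce s(t, y)) :
    InjOn (starColor cv ce t) (insert t (G.neighborSet t)) := by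
  have htx : x ≠ t := (G.ne_of_adj (by simp [← mem_neighborSet, ht] : G.Adj t x)).symm
  have hty : y ≠ t := (G.ne_of_adj (by simp [← mem_neighborSet, ht] : G.Adj t y)).symm
  rw [ht, injOn_insert (by simp [htx.symm, hty.symm]), injOn_pair]
  simp [starColor, htx, hty, hxy, hx.symm, hy.symm, hne]

theorem injOn_starColor_of_inter_compl_pair {z u v : V} (hu : G.Adj z u) (hv : G.Adj z v)
    (huv : u ≠ v) (h : InjOn (starColor cv ce z) (insert z (G.neighborSet z ∩ {u, v}ᶜ)))
    (hne : ce s(z, u) ≠ ce s(z, v)) (hu' : ce s(z, u) ∉ starPalette G {u, v}ᶜ cv ce z)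
    (hv' : ce s(z, v) ∉ starPalette G {u, v}ᶜ cv ce z) :
    InjOn (starColor cv ce z) (insert z (G.neighborSet z)) := by
  have hsplit : insert z (G.neighborSet z) =
      insert u (insert v (insert z (G.neighborSet z ∩ {u, v}ᶜ))) := by
    ext w
    simp only [mem_insert_iff, mem_inter_iff, mem_neighborSet, mem_compl_iff, mem_singleton_iff]
    by_cases hwu : w = u
    · simp [hwu, hu]
    by_cases hwv : w = v
    · simp [hwv, hv]
    simp [hwu, hwv]
  have hzu : u ≠ z := (G.ne_of_adj hu).symm
  have hzv : v ≠ z := (G.ne_of_adj hv).symm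
  have hcu : starColor cv ce z u = ce s(z, u) := if_neg hzu
  have hcv : starColor cv ce z v = ce s(z, v) := if_neg hzv
  rw [hsplit, injOn_insert (by simp [huv, hzu]), injOn_insert (by simp [hzv]),
    image_insert_eq (a := v), hcu, hcv]
  exact ⟨⟨h, hv'⟩, fun hmem => (mem_insert_iff.mp hmem).elim hne hu'⟩

end Palette

theorem IsTotalColoringOn.isTotalColoring_of_fourCycle {G : SimpleGraph V} {u v x y : V}
    (hu : G.neighborSet u = {x, y}) (hv : G.neighborSet v = {x, y}) (hxy : x ≠ y) (huv : u ≠ v)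
    {cv : V → Fin k} {ce : Sym2 V → Fin k} (h : IsTotalColoringOn G {u, v}ᶜ cv ce)
    (hvert : ∀ t ∈ ({u, v} : Set V), ∀ z ∈ ({x, y} : Set V), cv t ≠ cv z)
    (hstar_uv : ∀ t ∈ ({u, v} : Set V),
      cv t ≠ ce s(t, x) ∧ cv t ≠ ce s(t, y) ∧ ce s(t, x) ≠ ce s(t, y))
    (hstar_xy : ∀ z ∈ ({x, y} : Set V), ce s(z, u) ≠ ce s(z, v) ∧
      ce s(z, u) ∉ starPalette G {u, v}ᶜ cv ce z ∧ ce s(z, v) ∉ starPalette G {u, v}ᶜ cv ce z) :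
    IsTotalColoring G k cv ce := by
  have hN : ∀ t ∈ ({u, v} : Set V), G.neighborSet t = {x, y} := by
    rintro t (rfl | rfl)
    exacts [hu, hv]
  have hnew : ∀ t ∈ ({u, v} : Set V), ∀ z, G.Adj t z → cv t ≠ cv z := fun t ht z hz =>
    hvert t ht z (hN t ht ▸ hz)
  rw [isTotalColoring_iff_injOn_starColor]
  refine ⟨fun p q hpq => ?_, fun w => ?_⟩
  · by_cases hp : p ∈ ({u, v} : Set V)
    · exact hnew p hp q hpq
    by_cases hq : q ∈ ({u, v} : Set V)
    · exact (hnew q hq p hpq.symm).symm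
    exact h.1 p hp q hq hpq
  by_cases hw : w ∈ ({u, v} : Set V)
  · obtain ⟨hx, hy, hne⟩ := hstar_uv w hw
    exact injOn_starColor_of_neighborSet_eq_pair (hN w hw) hxy hx hy hne
  by_cases hw' : w ∈ ({x, y} : Set V)
  · obtain ⟨hne, hu', hv'⟩ := hstar_xy w hw'
    have hwu : G.Adj u w := by rwa [← mem_neighborSet, hu]
    have hwv : G.Adj v w := by rwa [← mem_neighborSet, hv]
    exact injOn_starColor_of_inter_compl_pair hwu.symm hwv.symm huv (h.2 w hw) hne hu' hv'
  have hwN : G.neighborSet w ∩ {u, v}ᶜ = G.neighborSet w := by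
    refine inter_eq_left.mpr fun z hz hzuv => hw' ?_
    rw [← hN z hzuv]
    exact hz.symm
  exact hwN ▸ h.2 w hw

theorem IsTotalColoringOn.isTotalColoring_update {G : SimpleGraph V} {u v x y : V}
    (hu : G.neighborSet u = {x, y}) (hv : G.neighborSet v = {x, y}) (hxy : x ≠ y) (huv : u ≠ v)
    {cv : V → Fin k} {ce : Sym2 V → Fin k} (h : IsTotalColoringOn G {u, v}ᶜ cv ce)
    {a b c d pu pv : Fin k} (hab : a ≠ b) (hcd : c ≠ d) (hac : a ≠ c) (hbd : b ≠ d)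
    (ha : a ∉ starPalette G {u, v}ᶜ cv ce x) (hb : b ∉ starPalette G {u, v}ᶜ cv ce x)
    (hc : c ∉ starPalette G {u, v}ᶜ cv ce y) (hd : d ∉ starPalette G {u, v}ᶜ cv ce y)
    (hpu : pu ∉ ({a, c, cv x, cv y} : Finset (Fin k)))
    (hpv : pv ∉ ({b, d, cv x, cv y} : Finset (Fin k))) :
    IsTotalColoring G k (Function.update (Function.update cv u pu) v pv)
      (Function.update (Function.update (Function.update (Function.update ce
        s(u, x) a) s(u, y) c) s(v, x) b) s(v, y) d) := by
  set cv' := Function.update (Function.update cv u pu) v pv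
  set ce' := Function.update (Function.update (Function.update (Function.update ce
    s(u, x) a) s(u, y) c) s(v, x) b) s(v, y) d
  have hxu : x ≠ u := (G.ne_of_adj (by simp [← mem_neighborSet, hu] : G.Adj u x)).symm
  have hyu : y ≠ u := (G.ne_of_adj (by simp [← mem_neighborSet, hu] : G.Adj u y)).symm
  have hxv : x ≠ v := (G.ne_of_adj (by simp [← mem_neighborSet, hv] : G.Adj v x)).symm
  have hyv : y ≠ v := (G.ne_of_adj (by simp [← mem_neighborSet, hv] : G.Adj v y)).symm
  have hxS : x ∈ ({u, v}ᶜ : Set V) := by simp [hxu, hxv]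
  have hyS : y ∈ ({u, v}ᶜ : Set V) := by simp [hyu, hyv]
  have hcv' : EqOn cv' cv {u, v}ᶜ := fun w hw => by
    simp only [mem_compl_iff, mem_insert_iff, mem_singleton_iff, not_or] at hw
    simp [cv', hw.1, hw.2]
  have hce' : ∀ p ∈ ({u, v}ᶜ : Set V), ∀ q ∈ ({u, v}ᶜ : Set V), ce' s(p, q) = ce s(p, q) := by
    intro p hp q hq
    simp only [mem_compl_iff, mem_insert_iff, mem_singleton_iff, not_or] at hp hq
    simp [ce', hp.1, hp.2, hq.1, hq.2]
  have hce_xu : ce' s(x, u) = a := by simp [Sym2.eq_swap, ce', huv, hxy, hxu, hxv]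
  have hce_yu : ce' s(y, u) = c := by simp [Sym2.eq_swap, ce', huv, hyv]
  have hce_xv : ce' s(x, v) = b := by simp [Sym2.eq_swap, ce', hxy, hxv]
  have hce_yv : ce' s(y, v) = d := by simp [Sym2.eq_swap, ce']
  simp only [Finset.mem_insert, Finset.mem_singleton, not_or] at hpu hpv
  refine (h.congr hcv' hce').isTotalColoring_of_fourCycle hu hv hxy huv ?_ ?_ ?_ <;>
    simp only [mem_insert_iff, mem_singleton_iff, forall_eq_or_imp, forall_eq]
  · simp [cv', huv, hxu, hyu, hxv, hyv, hpu, hpv]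
  · rw [Sym2.eq_swap, hce_xu, Sym2.eq_swap, hce_yu, Sym2.eq_swap, hce_xv, Sym2.eq_swap, hce_yv]
    simp [cv', huv, hpu, hpv, hac, hbd]
  · rw [starPalette_congr hcv' hce' hxS, starPalette_congr hcv' hce' hyS, hce_xu, hce_xv, hce_yu,
      hce_yv]
    exact ⟨⟨hab, ha, hb⟩, hcd, hc, hd⟩

end TotalColoring

theorem stmt_3 {V : Type*} [Fintype V] (G : SimpleGraph V) [DecidableRel G.Adj]
    (u v x y : V) (M : ℕ) (hM : 5 ≤ M) (hDelta : G.maxDegree ≤ M)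
    (hxy : x ≠ y) (huv : u ≠ v)
    (hu : G.neighborSet u = {x, y}) (hv : G.neighborSet v = {x, y})
    (h : HasTotalColoring (G.induce ({u, v}ᶜ : Set V)) (M + 1)) :
    HasTotalColoring G (M + 1) := by
  classical
  have hux : G.Adj u x := by simp [← mem_neighborSet, hu]
  have huy : G.Adj u y := by simp [← mem_neighborSet, hu]
  have hvx : G.Adj v x := by simp [← mem_neighborSet, hv]
  have hvy : G.Adj v y := by simp [← mem_neighborSet, hv]
  have hdeg : ∀ z, G.degree z < M + 1 := fun z =>
    Nat.lt_succ_of_le ((G.degree_le_maxDegree z).trans hDelta)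
  obtain ⟨cv, ce, hS⟩ := h.exists_isTotalColoringOn
  obtain ⟨a, ha, b, hb, c, hc, d, hd, hab, hcd, hac, hbd⟩ :=
    (starPalette_compl_nontrivial (cv := cv) (ce := ce) hux.symm hvx.symm huv
      (hdeg x)).exists_four_cycle_coloring
    (starPalette_compl_nontrivial huy.symm hvy.symm huv (hdeg y))
  obtain ⟨pu, hpu⟩ := Fin.exists_notMem_quadruple (by omega) a c (cv x) (cv y)
  obtain ⟨pv, hpv⟩ := Fin.exists_notMem_quadruple (by omega) b d (cv x) (cv y)
  exact ⟨_, _, hS.isTotalColoring_update hu hv hxy huv hab hcd hac hbd ha hb hc hd hpu hpv⟩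
end

section
/- Let M ≥ 5 and let G be a graph with Δ(G) ≤ M containing vertices u,v,x,y forming a 4-cycle u,x,v,y with the chord uv ∈ E(G), where deg(u)=deg(v)=3. If G−uv admits an (M+1)-total coloring, then G admits an (M+1)-total coloring. -/
open SimpleGraph

/-!
Keep the coloring of `G - uv` everywhere except at `u`, `v` and the new edge `uv`. As `u` has
degree 3, a new color for `u` only has to avoid the colors of `x`, `y`, `ux`, `uy` and `uv`, and
likewise for `v`, while `uv` only has to avoid the colors of `ux`, `uy`, `vx`, `vy`. With six
colors this succeeds as soon as one of the two five-element forbidden sets has a repetition: give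
`uv` the color of `x`, unless that color is already on `uy` or `vy`, in which case the forbidden
set at `u` or at `v` has a repetition anyway.
-/

section ColorChoice

theorem exists_notMem_of_card_lt {α : Type*} [Fintype α] {s : Finset α}
    (h : s.card < Fintype.card α) : ∃ a, a ∉ s := by
  obtain ⟨a, -, ha⟩ := Finset.exists_mem_notMem_of_card_lt_card (s := s) (t := Finset.univ)
    (by rwa [Finset.card_univ])
  exact ⟨a, ha⟩

variable {α : Type*} [Fintype α] [DecidableEq α]

theorem exists_ne_notMem_notMem {s t : Finset α} (hs : s.card + 1 < Fintype.card α)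
    (ht : t.card < Fintype.card α) : ∃ p q, p ∉ s ∧ q ∉ t ∧ p ≠ q := by
  obtain ⟨q, hq⟩ := exists_notMem_of_card_lt ht
  obtain ⟨p, hp⟩ := exists_notMem_of_card_lt ((Finset.card_insert_le q s).trans_lt hs)
  rw [Finset.mem_insert, not_or] at hp
  exact ⟨p, q, hp.2, hq, hp.1⟩

/-- `a, b, c, d` stand for the colors of `ux, uy, vx, vy` and `X, Y` for those of `x, y`. -/
theorem exists_chord_colors (hα : 6 ≤ Fintype.card α) {a b c d X : α} (Y : α)
    (hXa : X ≠ a) (hXc : X ≠ c) :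
    ∃ t p q, t ∉ ({a, b, c, d} : Finset α) ∧ p ∉ ({a, b, X, Y, t} : Finset α) ∧
      q ∉ ({c, d, X, Y, t} : Finset α) ∧ p ≠ q := by
  have four_lt (a b c d : α) : ({a, b, c, d} : Finset α).card + 1 < Fintype.card α := by
    have := Finset.card_le_four (a := a) (b := b) (c := c) (d := d); omega
  have five_lt (a b c d e : α) : ({a, b, c, d, e} : Finset α).card < Fintype.card α := by
    have := Finset.card_le_five (a := a) (b := b) (c := c) (d := d) (e := e); omega
  by_cases hXb : X = b
  · subst hXb
    obtain ⟨t, ht⟩ := exists_notMem_of_card_lt ((Nat.lt_succ_self _).trans (four_lt a X c d))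
    obtain ⟨p, q, hp, hq, hpq⟩ := exists_ne_notMem_notMem (four_lt a X Y t) (five_lt c d X Y t)
    exact ⟨t, p, q, ht, by simpa using hp, hq, hpq⟩
  by_cases hXd : X = d
  · subst hXd
    obtain ⟨t, ht⟩ := exists_notMem_of_card_lt ((Nat.lt_succ_self _).trans (four_lt a b c X))
    obtain ⟨q, p, hq, hp, hqp⟩ := exists_ne_notMem_notMem (four_lt c X Y t) (five_lt a b X Y t)
    exact ⟨t, p, q, ht, hp, by simpa using hq, hqp.symm⟩
  obtain ⟨p, q, hp, hq, hpq⟩ := exists_ne_notMem_notMem (four_lt a b Y X) (five_lt c d X Y X)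
  exact ⟨X, p, q, by simp [hXa, hXb, hXc, hXd], by simpa using hp, hq, hpq⟩

end ColorChoice

namespace SimpleGraph

variable {V : Type*} {G : SimpleGraph V} {u v : V}

theorem mem_edgeSet_deleteEdges_singleton {e f : Sym2 V} (he : e ∈ G.edgeSet) (hef : e ≠ f) :
    e ∈ (G.deleteEdges {f}).edgeSet := by
  rw [edgeSet_deleteEdges]
  exact ⟨he, hef⟩

theorem exists_adj_of_mem_edgeSet_deleteEdges {e : Sym2 V}
    (he : e ∈ (G.deleteEdges {s(u, v)}).edgeSet) (hu : u ∈ e) :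
    ∃ w, w ≠ v ∧ G.Adj u w ∧ e = s(u, w) := by
  obtain ⟨w, rfl⟩ := Sym2.mem_iff_exists.1 hu
  simp only [edgeSet_deleteEdges, Set.mem_sdiff, mem_edgeSet, Set.mem_singleton_iff] at he
  exact ⟨w, fun hwv => he.2 (hwv ▸ rfl), he.1, rfl⟩

theorem eq_or_eq_or_eq_of_degree_eq_three {a b c w : V} [Fintype (G.neighborSet u)]
    (hd : G.degree u = 3) (ha : G.Adj u a) (hb : G.Adj u b) (hc : G.Adj u c) (hab : a ≠ b)
    (hac : a ≠ c) (hbc : b ≠ c) (hw : G.Adj u w) : w = a ∨ w = b ∨ w = c := by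
  classical
  have hsub : ({a, b, c} : Finset V) ⊆ G.neighborFinset u := by
    intro z hz
    simp only [Finset.mem_insert, Finset.mem_singleton] at hz
    rcases hz with rfl | rfl | rfl <;> simpa
  have hcard : ({a, b, c} : Finset V).card = 3 :=
    Finset.card_eq_three.2 ⟨a, b, c, hab, hac, hbc, rfl⟩
  have hnbr : G.neighborFinset u = {a, b, c} :=
    (Finset.eq_of_subset_of_card_le hsub (by rw [card_neighborFinset_eq_degree, hd, hcard])).symm
  simpa [hnbr] using (G.mem_neighborFinset u w).2 hw

/-- `p` is a new color for `u` and `t` a color for the missing edge `uv` that clash with nothing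
around `u` except possibly at `v`. -/
def IsFreeAt {k : ℕ} (G : SimpleGraph V) (cv : V → Fin k) (ce : Sym2 V → Fin k) (u v : V)
    (p t : Fin k) : Prop :=
  ∀ w, w ≠ v → G.Adj u w → p ≠ cv w ∧ p ≠ ce s(u, w) ∧ t ≠ ce s(u, w)

theorem IsFreeAt.ne_of_mem {k : ℕ} {cv : V → Fin k} {ce : Sym2 V → Fin k} {p t : Fin k}
    (hu : G.IsFreeAt cv ce u v p t) {e : Sym2 V} (he : e ∈ (G.deleteEdges {s(u, v)}).edgeSet)
    (hue : u ∈ e) : p ≠ ce e ∧ t ≠ ce e := by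
  obtain ⟨w, hwv, huw, rfl⟩ := exists_adj_of_mem_edgeSet_deleteEdges he hue
  exact (hu w hwv huw).2

end SimpleGraph

section Recolor

variable {V : Type*} [DecidableEq V] {G : SimpleGraph V} {u v : V} {k : ℕ} {cv : V → Fin k}
  {ce : Sym2 V → Fin k} {p q t : Fin k}

theorem IsTotalColoring.recolor_adj (hc : IsTotalColoring (G.deleteEdges {s(u, v)}) k cv ce)
    (huv : u ≠ v) (hpq : p ≠ q) (hu : G.IsFreeAt cv ce u v p t) (hv : G.IsFreeAt cv ce v u q t)
    {a b : V} (hab : G.Adj a b) :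
    Function.update (Function.update cv v q) u p a ≠
      Function.update (Function.update cv v q) u p b := by
  set cv' := Function.update (Function.update cv v q) u p
  have cv'_u : cv' u = p := Function.update_self ..
  have cv'_v : cv' v = q := by simp [cv', huv.symm]
  have cv'_of_ne {w : V} (hwu : w ≠ u) (hwv : w ≠ v) : cv' w = cv w := by simp [cv', hwu, hwv]
  have at_end {a b : V} (hab : G.Adj a b) (ha : a = u ∨ a = v) : cv' a ≠ cv' b := by
    rcases ha with rfl | rfl
    · by_cases hbv : b = v
      · rwa [hbv, cv'_u, cv'_v]
      · simpa [cv'_u, cv'_of_ne hab.ne' hbv] using (hu b hbv hab).1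
    · by_cases hbu : b = u
      · rw [hbu, cv'_u, cv'_v]; exact hpq.symm
      · simpa [cv'_v, cv'_of_ne hbu hab.ne'] using (hv b hbu hab).1
  by_cases ha : a = u ∨ a = v
  · exact at_end hab ha
  by_cases hb : b = u ∨ b = v
  · exact (at_end hab.symm hb).symm
  rw [not_or] at ha hb
  rw [cv'_of_ne ha.1 ha.2, cv'_of_ne hb.1 hb.2]
  refine hc.1 ((deleteEdges_adj ..).2 ⟨hab, fun hab' => ?_⟩)
  rcases Sym2.eq_iff.1 (Set.mem_singleton_iff.1 hab') with ⟨h, -⟩ | ⟨h, -⟩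
  exacts [ha.1 h, ha.2 h]

theorem IsTotalColoring.update_chord_ne
    (hc : IsTotalColoring (G.deleteEdges {s(u, v)}) k cv ce)
    (hu : G.IsFreeAt cv ce u v p t) (hv : G.IsFreeAt cv ce v u q t) {e f : Sym2 V}
    (he : e ∈ G.edgeSet) (hf : f ∈ G.edgeSet) (hef : e ≠ f)
    (hw : ∃ w, w ∈ e ∧ w ∈ f) :
    Function.update ce s(u, v) t e ≠ Function.update ce s(u, v) t f := by
  have at_chord {f : Sym2 V} {w : V} (hf : f ∈ G.edgeSet) (hfe : f ≠ s(u, v))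
      (hwe : w ∈ s(u, v)) (hwf : w ∈ f) : t ≠ ce f := by
    have hf' := mem_edgeSet_deleteEdges_singleton hf hfe
    rcases Sym2.mem_iff.1 hwe with rfl | rfl
    · exact (hu.ne_of_mem hf' hwf).2
    · exact (hv.ne_of_mem (Sym2.eq_swap (a := u) ▸ hf') hwf).2
  obtain ⟨w, hwe, hwf⟩ := hw
  by_cases he' : e = s(u, v)
  · subst he'
    rw [Function.update_self, Function.update_of_ne hef.symm]
    exact at_chord hf hef.symm hwe hwf
  by_cases hf' : f = s(u, v)
  · subst hf'
    rw [Function.update_self, Function.update_of_ne he']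
    exact (at_chord he he' hwf hwe).symm
  rw [Function.update_of_ne he', Function.update_of_ne hf']
  exact hc.2.1 e f (mem_edgeSet_deleteEdges_singleton he he')
    (mem_edgeSet_deleteEdges_singleton hf hf') hef ⟨w, hwe, hwf⟩

theorem IsTotalColoring.recolor_ne_update_chord
    (hc : IsTotalColoring (G.deleteEdges {s(u, v)}) k cv ce) (huv : u ≠ v) (hpt : p ≠ t)
    (hqt : q ≠ t) (hu : G.IsFreeAt cv ce u v p t) (hv : G.IsFreeAt cv ce v u q t) {w : V}
    {e : Sym2 V} (he : e ∈ G.edgeSet) (hwe : w ∈ e) :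
    Function.update (Function.update cv v q) u p w ≠ Function.update ce s(u, v) t e := by
  by_cases he' : e = s(u, v)
  · subst he'
    rw [Function.update_self]
    rcases Sym2.mem_iff.1 hwe with rfl | rfl
    · rwa [Function.update_self]
    · rwa [Function.update_of_ne huv.symm, Function.update_self]
  have he'' := mem_edgeSet_deleteEdges_singleton he he'
  rw [Function.update_of_ne he']
  by_cases hwu : w = u
  · subst hwu
    rw [Function.update_self]
    exact (hu.ne_of_mem he'' hwe).1
  by_cases hwv : w = v
  · subst hwv
    rw [Function.update_of_ne hwu, Function.update_self]
    exact (hv.ne_of_mem (Sym2.eq_swap (a := w) ▸ he'') hwe).1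
  rw [Function.update_of_ne hwu, Function.update_of_ne hwv]
  exact hc.2.2 w e he'' hwe

theorem IsTotalColoring.hasTotalColoring_of_isFreeAt
    (hc : IsTotalColoring (G.deleteEdges {s(u, v)}) k cv ce) (huv : u ≠ v) (hpq : p ≠ q)
    (hpt : p ≠ t) (hqt : q ≠ t) (hu : G.IsFreeAt cv ce u v p t)
    (hv : G.IsFreeAt cv ce v u q t) : HasTotalColoring G k :=
  ⟨_, _, fun _ _ hab => hc.recolor_adj huv hpq hu hv hab,
    fun _ _ he hf hef hw => hc.update_chord_ne hu hv he hf hef hw,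
    fun _ _ he hwe => hc.recolor_ne_update_chord huv hpt hqt hu hv he hwe⟩

end Recolor

theorem stmt_4_general {V : Type*} [Fintype V] (G : SimpleGraph V) [DecidableRel G.Adj]
    (u v x y : V) (M : ℕ) (hM : 5 ≤ M)
    (hxy : x ≠ y)
    (hux : G.Adj u x) (hxv : G.Adj x v) (hvy : G.Adj v y) (hyu : G.Adj y u)
    (huv : G.Adj u v) (hdu : G.degree u = 3) (hdv : G.degree v = 3)
    (h : HasTotalColoring (G.deleteEdges {s(u, v)}) (M + 1)) :
    HasTotalColoring G (M + 1) := by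
  classical
  obtain ⟨cv, ce, hc⟩ := h
  have hxa : cv x ≠ ce s(u, x) :=
    hc.2.2 x _ (by simp [hux, hxv.ne, hux.ne']) (Sym2.mem_mk_right u x)
  have hxc : cv x ≠ ce s(v, x) :=
    hc.2.2 x _ (by simp [hxv.symm, hux.ne', hxv.ne]) (Sym2.mem_mk_right v x)
  obtain ⟨t, p, q, ht, hp, hq, hpq⟩ :=
    exists_chord_colors (α := Fin (M + 1)) (by rw [Fintype.card_fin]; omega) (cv y) hxa hxc
  simp only [Finset.mem_insert, Finset.mem_singleton, not_or] at ht hp hq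
  refine hc.hasTotalColoring_of_isFreeAt huv.ne hpq hp.2.2.2.2 hq.2.2.2.2 ?_ ?_
  · intro w hwv huw
    rcases G.eq_or_eq_or_eq_of_degree_eq_three hdu huv hux hyu.symm hxv.ne' hvy.ne hxy huw
      with rfl | rfl | rfl
    exacts [absurd rfl hwv, ⟨hp.2.2.1, hp.1, ht.1⟩, ⟨hp.2.2.2.1, hp.2.1, ht.2.1⟩]
  · intro w hwu huw
    rcases G.eq_or_eq_or_eq_of_degree_eq_three hdv huv.symm hxv.symm hvy hux.ne hyu.ne' hxy huw
      with rfl | rfl | rfl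
    exacts [absurd rfl hwu, ⟨hq.2.2.1, hq.1, ht.2.2.1⟩, ⟨hq.2.2.2.1, hq.2.1, ht.2.2.2⟩]

theorem stmt_4 {V : Type*} [Fintype V] (G : SimpleGraph V) [DecidableRel G.Adj]
    (u v x y : V) (M : ℕ) (hM : 5 ≤ M) (hDelta : G.maxDegree ≤ M)
    (hxy : x ≠ y)
    (hux : G.Adj u x) (hxv : G.Adj x v) (hvy : G.Adj v y) (hyu : G.Adj y u)
    (huv : G.Adj u v) (hdu : G.degree u = 3) (hdv : G.degree v = 3)
    (h : HasTotalColoring (G.deleteEdges {s(u, v)}) (M + 1)) :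
    HasTotalColoring G (M + 1) :=
  stmt_4_general G u v x y M hM hxy hux hxv hvy hyu huv hdu hdv h
end

section
/- Let M ≥ 5 and let G be a graph with Δ(G) ≤ M containing a path x',u,x,v,y,w,y' with deg(u)=deg(v)=deg(w)=2, deg(x)=deg(y)=5, and with the additional edges xx', yy', xy, x'y, xy' in G. If G−{u,v,w} admits an (M+1)-total coloring, then G admits an (M+1)-total coloring. -/
open SimpleGraph

/-!
Start from a total colouring of `G - {u, v, w}`. Apart from the edge `xy`, only three colours are
in use at `x` (its own and those of its two remaining edges, as `deg x = 5`), and likewise at `y`;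
at `x'` and `y'` at most `Δ` colours are in use. With at least six colours the path edges
`x'u, ux, xv, vy, yw, wy'` can be coloured greedily from both ends, keeping the colour of `xy`.
The only obstruction, `x'` and `y'` both missing exactly the same single colour `α`, is removed by
recolouring `xy` with `α`, which frees its old colour for `xv` and `yw`. Finally `u`, `v`, `w` have
degree two, so each sees only four colours and is coloured last.
-/

section

variable {V : Type*}

def colorsAt {α : Type*} (G : SimpleGraph V) (cv : V → α) (ce : Sym2 V → α) (p : V) : Set α :=
  insert (cv p) ((fun q => ce s(p, q)) '' G.neighborSet p)

section colorsAt

variable {α : Type*} {G H : SimpleGraph V} {cv : V → α} {ce : Sym2 V → α} {p q a b : V}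

lemma cv_mem_colorsAt : cv p ∈ colorsAt G cv ce p := Set.mem_insert _ _

lemma ce_mem_colorsAt (h : G.Adj p q) : ce s(p, q) ∈ colorsAt G cv ce p :=
  Set.mem_insert_of_mem _ ⟨q, h, rfl⟩

lemma ce_mem_colorsAt_of_mem_edgeSet {e : Sym2 V} (he : e ∈ G.edgeSet) (hp : p ∈ e) :
    ce e ∈ colorsAt G cv ce p := by
  obtain ⟨q, rfl⟩ := Sym2.mem_iff_exists.1 hp
  exact ce_mem_colorsAt he

lemma colorsAt_of_forall_not_adj (hp : ∀ q, ¬G.Adj p q) : colorsAt G cv ce p = {cv p} := by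
  have : G.neighborSet p = ∅ := Set.eq_empty_of_forall_notMem hp
  simp [colorsAt, this]

lemma colorsAt_update_of_ne [DecidableEq V] {z : V} {c : α} (hz : z ≠ p) :
    colorsAt G (Function.update cv z c) ce p = colorsAt G cv ce p := by
  simp [colorsAt, hz.symm]

lemma colorsAt_sup_edge_of_ne [DecidableEq V] {c : α} (ha : a ≠ p) (hb : b ≠ p) :
    colorsAt (G ⊔ edge a b) cv (Function.update ce s(a, b) c) p = colorsAt G cv ce p := by
  ext d
  simp [colorsAt, edge_adj, ha.symm, hb.symm]

lemma notMem_colorsAt_sup_edge [DecidableEq V] {c d : α} (hd : d ∉ colorsAt G cv ce p)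
    (hdc : d ≠ c) : d ∉ colorsAt (G ⊔ edge a b) cv (Function.update ce s(a, b) c) p := by
  rintro (h | ⟨q, hq, rfl⟩)
  · exact hd (h ▸ cv_mem_colorsAt)
  · by_cases hab : s(p, q) = s(a, b)
    · simp [hab] at hdc
    · simp only [Function.update_of_ne hab] at hd hdc
      rcases hq with hq | hq
      · exact hd (ce_mem_colorsAt hq)
      · exact hab ((adj_edge _ _).1 hq).1.symm

lemma ncard_colorsAt_add_ncard_le [Fintype (G.neighborSet p)] (hle : H ≤ G) {D : Set V}
    (hD : D ⊆ G.neighborSet p) (hHD : ∀ q ∈ D, ¬H.Adj p q) :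
    (colorsAt H cv ce p).ncard + D.ncard ≤ G.degree p + 1 := by
  have hfin : (G.neighborSet p).Finite := Set.toFinite _
  have hsub : H.neighborSet p ⊆ G.neighborSet p := fun q hq => hle hq
  have hunion : (H.neighborSet p ∪ D).ncard = (H.neighborSet p).ncard + D.ncard :=
    Set.ncard_union_eq (Set.disjoint_right.2 hHD) (hfin.subset hsub) (hfin.subset hD)
  have hdeg : (H.neighborSet p ∪ D).ncard ≤ G.degree p := by
    rw [← card_neighborSet_eq_degree, ← Nat.card_eq_fintype_card, Nat.card_coe_set_eq]
    exact Set.ncard_le_ncard (Set.union_subset hsub hD) hfin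
  have hcol : (colorsAt H cv ce p).ncard ≤ (H.neighborSet p).ncard + 1 :=
    (Set.ncard_insert_le _ _).trans (Nat.add_le_add_right (Set.ncard_image_le (hfin.subset hsub)) 1)
  omega

end colorsAt

theorem exists_notMem_of_ncard_lt {α : Type*} [Finite α] {s : Set α} (hs : s.ncard < Nat.card α) :
    ∃ c, c ∉ s :=
  (Set.ne_univ_iff_exists_notMem s).1 fun h => (h ▸ hs).ne (Set.ncard_univ α)

theorem exists_notMem_ne_ne {α : Type*} [Finite α] {s : Set α} (hs : s.ncard + 2 < Nat.card α)
    (a b : α) : ∃ c, c ∉ s ∧ c ≠ a ∧ c ≠ b := by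
  obtain ⟨c, hc⟩ := exists_notMem_of_ncard_lt (s := insert a (insert b s)) <| by
    have := Set.ncard_insert_le a (insert b s)
    have := Set.ncard_insert_le b s
    omega
  simp only [Set.mem_insert_iff, not_or] at hc
  exact ⟨c, hc.2.2, hc.1, hc.2.1⟩

/- In the next two lemmas `t` is the new colour of the edge `xy` and `c₁, …, c₆` those of the path
edges `x'u, ux, xv, vy, yw, wy'`; `A` and `B` are the colours in use at `x` and `y` apart from the
edge `xy`, whose current colour is `t₀`, and `S`, `S'` are the colours in use at `x'` and `y'`. -/

theorem exists_path_colors_of_forall_notMem {α : Type*} [Finite α] (hk : 6 ≤ Nat.card α)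
    {A B S S' : Set α} {t₀ : α} (hA : A.ncard ≤ 3) (hB : B.ncard ≤ 3) (hS : S.ncard < Nat.card α)
    (hS' : S'.ncard < Nat.card α) (htA : t₀ ∉ A) (htB : t₀ ∉ B)
    (h₁ : ∀ c ∉ S, c ≠ t₀ ∧ c ∉ A) (h₆ : ∀ c ∉ S', c ≠ t₀ ∧ c ∉ B) :
    ∃ t c₁ c₂ c₃ c₄ c₅ c₆ : α, t ∉ A ∧ t ∉ B ∧ c₁ ∉ S ∧ c₆ ∉ S' ∧
      c₂ ∉ A ∧ c₃ ∉ A ∧ c₄ ∉ B ∧ c₅ ∉ B ∧ c₂ ≠ t ∧ c₃ ≠ t ∧ c₄ ≠ t ∧ c₅ ≠ t ∧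
      c₁ ≠ c₂ ∧ c₂ ≠ c₃ ∧ c₃ ≠ c₄ ∧ c₄ ≠ c₅ ∧ c₅ ≠ c₆ := by
  have pickA := exists_notMem_ne_ne (s := A) (by omega)
  have pickB := exists_notMem_ne_ne (s := B) (by omega)
  obtain ⟨c₁, hc₁⟩ := exists_notMem_of_ncard_lt hS
  obtain ⟨c₆, hc₆⟩ := exists_notMem_of_ncard_lt hS'
  obtain ⟨hc₁t, hc₁A⟩ := h₁ c₁ hc₁
  obtain ⟨hc₆t, hc₆B⟩ := h₆ c₆ hc₆
  by_cases h₁₆ : c₁ = c₆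
  · -- Recolouring `xy` with `c₁ ∉ A ∪ B` frees `t₀` for `c₃` and `c₅`.
    subst h₁₆
    obtain ⟨c₂, hc₂A, hc₂₁, hc₂t⟩ := pickA c₁ t₀
    obtain ⟨c₄, hc₄B, hc₄₁, hc₄t⟩ := pickB c₁ t₀
    exact ⟨c₁, c₁, c₂, t₀, c₄, t₀, c₁, hc₁A, hc₆B, hc₁, hc₆, hc₂A, htA, hc₄B, htB, hc₂₁,
      Ne.symm hc₁t, hc₄₁, Ne.symm hc₁t, hc₂₁.symm, hc₂t, Ne.symm hc₄t, hc₄t, Ne.symm hc₁t⟩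
  · obtain ⟨c₂, hc₂A, hc₂t, hc₂₁⟩ := pickA t₀ c₁
    obtain ⟨c₅, hc₅B, hc₅t, hc₅₆⟩ := pickB t₀ c₆
    exact ⟨t₀, c₁, c₂, c₁, c₆, c₅, c₆, htA, htB, hc₁, hc₆, hc₂A, hc₁A, hc₆B, hc₅B, hc₂t, hc₁t,
      hc₆t, hc₅t, hc₂₁.symm, hc₂₁, h₁₆, hc₅₆.symm, hc₅₆⟩

theorem exists_path_colors {α : Type*} [Finite α] (hk : 6 ≤ Nat.card α) {A B S S' : Set α}
    {t₀ : α} (hA : A.ncard ≤ 3) (hB : B.ncard ≤ 3) (hS : S.ncard < Nat.card α)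
    (hS' : S'.ncard < Nat.card α) (htA : t₀ ∉ A) (htB : t₀ ∉ B) :
    ∃ t c₁ c₂ c₃ c₄ c₅ c₆ : α, t ∉ A ∧ t ∉ B ∧ c₁ ∉ S ∧ c₆ ∉ S' ∧
      c₂ ∉ A ∧ c₃ ∉ A ∧ c₄ ∉ B ∧ c₅ ∉ B ∧ c₂ ≠ t ∧ c₃ ≠ t ∧ c₄ ≠ t ∧ c₅ ≠ t ∧
      c₁ ≠ c₂ ∧ c₂ ≠ c₃ ∧ c₃ ≠ c₄ ∧ c₄ ≠ c₅ ∧ c₅ ≠ c₆ := by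
  have pickA := exists_notMem_ne_ne (s := A) (by omega)
  have pickB := exists_notMem_ne_ne (s := B) (by omega)
  by_cases h₁ : ∃ c₁ ∉ S, c₁ = t₀ ∨ c₁ ∈ A
  · -- Greedily from `y'` back to `x'`; then `c₂ ≠ c₁` as `c₂ ∉ A ∪ {t₀}`.
    obtain ⟨c₁, hc₁, hc₁A⟩ := h₁
    obtain ⟨c₆, hc₆⟩ := exists_notMem_of_ncard_lt hS'
    obtain ⟨c₅, hc₅B, hc₅t, hc₅₆⟩ := pickB t₀ c₆
    obtain ⟨c₄, hc₄B, hc₄t, hc₄₅⟩ := pickB t₀ c₅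
    obtain ⟨c₃, hc₃A, hc₃t, hc₃₄⟩ := pickA t₀ c₄
    obtain ⟨c₂, hc₂A, hc₂t, hc₂₃⟩ := pickA t₀ c₃
    refine ⟨t₀, c₁, c₂, c₃, c₄, c₅, c₆, htA, htB, hc₁, hc₆, hc₂A, hc₃A, hc₄B, hc₅B, hc₂t, hc₃t,
      hc₄t, hc₅t, ?_, hc₂₃, hc₃₄, hc₄₅, hc₅₆⟩
    rintro rfl
    rcases hc₁A with rfl | h
    exacts [hc₂t rfl, hc₂A h]
  by_cases h₆ : ∃ c₆ ∉ S', c₆ = t₀ ∨ c₆ ∈ B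
  · obtain ⟨c₆, hc₆, hc₆B⟩ := h₆
    obtain ⟨c₁, hc₁⟩ := exists_notMem_of_ncard_lt hS
    obtain ⟨c₂, hc₂A, hc₂t, hc₂₁⟩ := pickA t₀ c₁
    obtain ⟨c₃, hc₃A, hc₃t, hc₃₂⟩ := pickA t₀ c₂
    obtain ⟨c₄, hc₄B, hc₄t, hc₄₃⟩ := pickB t₀ c₃
    obtain ⟨c₅, hc₅B, hc₅t, hc₅₄⟩ := pickB t₀ c₄
    refine ⟨t₀, c₁, c₂, c₃, c₄, c₅, c₆, htA, htB, hc₁, hc₆, hc₂A, hc₃A, hc₄B, hc₅B, hc₂t, hc₃t,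
      hc₄t, hc₅t, hc₂₁.symm, hc₃₂.symm, hc₄₃.symm, hc₅₄.symm, ?_⟩
    rintro rfl
    rcases hc₆B with rfl | h
    exacts [hc₅t rfl, hc₅B h]
  push Not at h₁ h₆
  exact exists_path_colors_of_forall_notMem hk hA hB hS hS' htA htB h₁ h₆

namespace SimpleGraph

variable {G : SimpleGraph V}

theorem adj_iff_of_degree_eq_two {z a b : V} [Fintype (G.neighborSet z)] (hz : G.degree z = 2)
    (ha : G.Adj z a) (hb : G.Adj z b) (hab : a ≠ b) (q : V) : G.Adj z q ↔ q = a ∨ q = b := by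
  classical
  have : G.neighborFinset z = {a, b} :=
    (Finset.eq_of_subset_of_card_le (by simp [Finset.insert_subset_iff, ha, hb])
      (by rw [card_neighborFinset_eq_degree, hz, Finset.card_pair hab])).symm
  rw [← mem_neighborFinset, this, Finset.mem_insert, Finset.mem_singleton]

theorem deleteIncidenceSet_sup_edge_sup_edge {z a b : V} (h : ∀ q, G.Adj z q ↔ q = a ∨ q = b) :
    G.deleteIncidenceSet z ⊔ edge z a ⊔ edge z b = G := by
  have ha := (edge_le_iff G).2 (.inr ((h a).2 (.inl rfl)))
  have hb := (edge_le_iff G).2 (.inr ((h b).2 (.inr rfl)))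
  refine le_antisymm (sup_le (sup_le (deleteIncidenceSet_le _ _) ha) hb) fun p q hpq => ?_
  simp only [sup_adj, deleteIncidenceSet_adj, edge_adj]
  by_cases hp : p = z
  · subst hp
    rcases (h q).1 hpq with rfl | rfl
    exacts [.inl (.inr ⟨.inl ⟨rfl, rfl⟩, hpq.ne⟩), .inr ⟨.inl ⟨rfl, rfl⟩, hpq.ne⟩]
  by_cases hq : q = z
  · subst hq
    rcases (h p).1 hpq.symm with rfl | rfl
    exacts [.inl (.inr ⟨.inr ⟨rfl, rfl⟩, hpq.ne⟩), .inr ⟨.inr ⟨rfl, rfl⟩, hpq.ne⟩]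
  exact .inl (.inl ⟨hpq, hp, hq⟩)

theorem deleteEdges_sup_edge {a b : V} (h : G.Adj a b) :
    G.deleteEdges {s(a, b)} ⊔ edge a b = G :=
  sdiff_sup_cancel ((edge_le_iff G).2 (.inr h))

theorem deleteIncidenceSet_sup_path {x' u x v y w y' : V} (hnd : [x', u, x, v, y, w, y'].Nodup)
    (hu : ∀ q, G.Adj u q ↔ q = x' ∨ q = x) (hv : ∀ q, G.Adj v q ↔ q = x ∨ q = y)
    (hw : ∀ q, G.Adj w q ↔ q = y ∨ q = y') :
    ((G.deleteIncidenceSet w).deleteIncidenceSet v).deleteIncidenceSet u ⊔ edge u x' ⊔ edge u x ⊔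
      edge v x ⊔ edge v y ⊔ edge w y ⊔ edge w y' = G := by
  simp only [List.nodup_cons, List.mem_cons, List.not_mem_nil, List.nodup_nil, not_or,
    or_false, and_true, not_false_eq_true] at hnd
  rw [deleteIncidenceSet_sup_edge_sup_edge, deleteIncidenceSet_sup_edge_sup_edge,
    deleteIncidenceSet_sup_edge_sup_edge hw]
  · intro q
    simp only [deleteIncidenceSet_adj, hv]
    aesop
  · intro q
    simp only [deleteIncidenceSet_adj, hu]
    aesop

end SimpleGraph

namespace IsTotalColoring

variable {G H : SimpleGraph V} {k : ℕ} {cv : V → Fin k} {ce : Sym2 V → Fin k} {a b : V}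

theorem mono (h : IsTotalColoring G k cv ce) (hle : H ≤ G) : IsTotalColoring H k cv ce :=
  ⟨fun _ _ hpq => h.1 (hle hpq),
    fun e f he hf => h.2.1 e f (edgeSet_mono hle he) (edgeSet_mono hle hf),
    fun p e he => h.2.2 p e (edgeSet_mono hle he)⟩

theorem ce_notMem_colorsAt_deleteEdges (h : IsTotalColoring G k cv ce) (hab : G.Adj a b)
    {p : V} (hp : p ∈ s(a, b)) : ce s(a, b) ∉ colorsAt (G.deleteEdges {s(a, b)}) cv ce p := by
  rintro (hc | ⟨q, hq, hc⟩)
  · exact h.2.2 p _ hab hp hc.symm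
  · rw [mem_neighborSet, deleteEdges_adj, Set.mem_singleton_iff] at hq
    exact h.2.1 _ _ hq.1 hab hq.2 ⟨p, Sym2.mem_mk_left _ _, hp⟩ hc

theorem update_of_forall_not_adj [DecidableEq V] (h : IsTotalColoring G k cv ce) {z : V}
    (hz : ∀ q, ¬G.Adj z q) (c : Fin k) : IsTotalColoring G k (Function.update cv z c) ce := by
  have hne : ∀ ⦃p q⦄, G.Adj p q → p ≠ z := fun p q hpq hpz => hz q (hpz ▸ hpq)
  refine ⟨fun p q hpq => ?_, h.2.1, fun p e he hp => ?_⟩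
  · rw [Function.update_of_ne (hne hpq), Function.update_of_ne (hne hpq.symm)]
    exact h.1 hpq
  · obtain ⟨q, rfl⟩ := Sym2.mem_iff_exists.1 hp
    rw [Function.update_of_ne (hne he)]
    exact h.2.2 p _ he hp

theorem sup_edge_s5 [DecidableEq V] (h : IsTotalColoring G k cv ce) {c : Fin k}
    (hv : cv a ≠ cv b) (ha : c ∉ colorsAt G cv ce a) (hb : c ∉ colorsAt G cv ce b) :
    IsTotalColoring (G ⊔ edge a b) k cv (Function.update ce s(a, b) c) := by
  have hfree : ∀ p ∈ s(a, b), c ∉ colorsAt G cv ce p := by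
    intro p hp
    rcases Sym2.mem_iff.1 hp with rfl | rfl
    exacts [ha, hb]
  have hcases : ∀ e ∈ (G ⊔ edge a b).edgeSet, e = s(a, b) ∨ (e ∈ G.edgeSet ∧ e ≠ s(a, b)) := by
    intro e he
    by_cases hab : e = s(a, b)
    · exact .inl hab
    · rw [edgeSet_sup, edgeSet_edge] at he
      exact .inr ⟨he.resolve_right fun h' => hab h'.1, hab⟩
  refine ⟨fun p q hpq => ?_, fun e f he hf hef ⟨w, hwe, hwf⟩ => ?_, fun p e he hp => ?_⟩
  · rcases hpq with hpq | hpq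
    · exact h.1 hpq
    · obtain ⟨⟨rfl, rfl⟩ | ⟨rfl, rfl⟩, -⟩ := (edge_adj _ _ _ _).1 hpq
      exacts [hv, hv.symm]
  · rcases hcases e he with rfl | ⟨he, hea⟩ <;> rcases hcases f hf with rfl | ⟨hf, hfa⟩
    · exact absurd rfl hef
    · rw [Function.update_self, Function.update_of_ne hfa]
      exact fun hc => hfree w hwe (hc ▸ ce_mem_colorsAt_of_mem_edgeSet hf hwf)
    · rw [Function.update_self, Function.update_of_ne hea]
      exact fun hc => hfree w hwf (hc.symm ▸ ce_mem_colorsAt_of_mem_edgeSet he hwe)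
    · rw [Function.update_of_ne hea, Function.update_of_ne hfa]
      exact h.2.1 e f he hf hef ⟨w, hwe, hwf⟩
  · rcases hcases e he with rfl | ⟨he, hea⟩
    · rw [Function.update_self]
      exact fun hc => hfree p hp (hc ▸ cv_mem_colorsAt)
    · rw [Function.update_of_ne hea]
      exact h.2.2 p e he hp

theorem exists_sup_edge_sup_edge [DecidableEq V] (h : IsTotalColoring G k cv ce) (hk : 5 ≤ k)
    {z : V} (hz : ∀ q, ¬G.Adj z q) (hza : z ≠ a) (hzb : z ≠ b) {ca cb : Fin k}
    (ha : ca ∉ colorsAt G cv ce a) (hb : cb ∉ colorsAt G cv ce b) (hab : ca ≠ cb) :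
    ∃ c, IsTotalColoring (G ⊔ edge z a ⊔ edge z b) k (Function.update cv z c)
      (Function.update (Function.update ce s(z, a) ca) s(z, b) cb) := by
  obtain ⟨c, hc, hca, hcb⟩ := exists_notMem_ne_ne (s := {cv a, cv b}) (by
    rw [Nat.card_eq_fintype_card, Fintype.card_fin]
    have := Set.ncard_insert_le (cv a) {cv b}
    rw [Set.ncard_singleton] at this
    omega) ca cb
  simp only [Set.mem_insert_iff, Set.mem_singleton_iff, not_or] at hc
  obtain ⟨hcva, hcvb⟩ := hc
  have h' := h.update_of_forall_not_adj hz c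
  have hzc : ∀ d, d ≠ c → d ∉ colorsAt G (Function.update cv z c) ce z := by
    intro d hd
    rw [colorsAt_of_forall_not_adj hz, Function.update_self]
    exact hd
  refine ⟨c, (h'.sup_edge_s5 ?_ (hzc ca hca.symm) ?_).sup_edge_s5 ?_ ?_ ?_⟩
  · rw [Function.update_self, Function.update_of_ne hza.symm]
    exact hcva
  · rwa [colorsAt_update_of_ne hza]
  · rw [Function.update_self, Function.update_of_ne hzb.symm]
    exact hcvb
  · exact notMem_colorsAt_sup_edge (hzc cb hcb.symm) hab.symm
  · exact notMem_colorsAt_sup_edge (by rwa [colorsAt_update_of_ne hzb]) hab.symm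

theorem hasTotalColoring_sup_path (h : IsTotalColoring H k cv ce) (hk : 6 ≤ k)
    {x' u x v y w y' : V}
    (hnd : [x', u, x, v, y, w, y'].Nodup)
    (hu : ∀ q, ¬H.Adj u q) (hv : ∀ q, ¬H.Adj v q) (hw : ∀ q, ¬H.Adj w q)
    (hx : (colorsAt H cv ce x).ncard ≤ 3) (hy : (colorsAt H cv ce y).ncard ≤ 3)
    (hx' : (colorsAt H cv ce x').ncard < k) (hy' : (colorsAt H cv ce y').ncard < k)
    (hxy : cv x ≠ cv y) {t₀ : Fin k} (htx : t₀ ∉ colorsAt H cv ce x)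
    (hty : t₀ ∉ colorsAt H cv ce y) :
    HasTotalColoring (H ⊔ edge x y ⊔ edge u x' ⊔ edge u x ⊔ edge v x ⊔ edge v y ⊔ edge w y ⊔
      edge w y') k := by
  classical
  simp only [List.nodup_cons, List.mem_cons, List.not_mem_nil, List.nodup_nil, not_or,
    or_false, and_true, not_false_eq_true] at hnd
  obtain ⟨⟨nx'u, nx'x, nx'v, nx'y, nx'w, nx'y'⟩, ⟨nux, nuv, nuy, nuw, nuy'⟩, ⟨nxv, nxy, nxw, nxy'⟩,
    ⟨nvy, nvw, nvy'⟩, ⟨nyw, nyy'⟩, nwy'⟩ := hnd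
  obtain ⟨t, c₁, c₂, c₃, c₄, c₅, c₆, htA, htB, hc₁, hc₆, hc₂A, hc₃A, hc₄B, hc₅B, hc₂t, hc₃t, hc₄t,
    hc₅t, hc₁₂, hc₂₃, hc₃₄, hc₄₅, hc₅₆⟩ :=
    exists_path_colors (by simpa using hk) hx hy (by simpa using hx') (by simpa using hy') htx hty
  have h₀ := h.sup_edge_s5 hxy htA htB
  obtain ⟨_, h₁⟩ := h₀.exists_sup_edge_sup_edge (by omega) (z := u) (a := x') (b := x)
    (fun q => by simp [edge_adj, hu, nux, nuy]) (Ne.symm nx'u) nux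
    (by rwa [colorsAt_sup_edge_of_ne (Ne.symm nx'x) (Ne.symm nx'y)])
    (notMem_colorsAt_sup_edge hc₂A hc₂t) hc₁₂
  obtain ⟨_, h₂⟩ := h₁.exists_sup_edge_sup_edge (by omega) (z := v) (a := x) (b := y)
    (fun q => by simp [edge_adj, hv, Ne.symm nxv, nvy, Ne.symm nuv, Ne.symm nx'v]) (Ne.symm nxv) nvy
    (by
      rw [colorsAt_update_of_ne nux]
      refine notMem_colorsAt_sup_edge ?_ hc₂₃.symm
      rw [colorsAt_sup_edge_of_ne nux nx'x]
      exact notMem_colorsAt_sup_edge hc₃A hc₃t)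
    (by
      rw [colorsAt_update_of_ne nuy, colorsAt_sup_edge_of_ne nuy nxy,
        colorsAt_sup_edge_of_ne nuy nx'y]
      exact notMem_colorsAt_sup_edge hc₄B hc₄t) hc₃₄
  obtain ⟨_, h₃⟩ := h₂.exists_sup_edge_sup_edge (by omega) (z := w) (a := y) (b := y')
    (fun q => by simp [edge_adj, hw, Ne.symm nxw, Ne.symm nyw, Ne.symm nuw, Ne.symm nx'w,
      Ne.symm nvw]) (Ne.symm nyw) nwy'
    (by
      rw [colorsAt_update_of_ne nvy]
      refine notMem_colorsAt_sup_edge ?_ hc₄₅.symm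
      rw [colorsAt_sup_edge_of_ne nvy nxy, colorsAt_update_of_ne nuy,
        colorsAt_sup_edge_of_ne nuy nxy, colorsAt_sup_edge_of_ne nuy nx'y]
      exact notMem_colorsAt_sup_edge hc₅B hc₅t)
    (by
      rw [colorsAt_update_of_ne nvy', colorsAt_sup_edge_of_ne nvy' nyy',
        colorsAt_sup_edge_of_ne nvy' nxy', colorsAt_update_of_ne nuy',
        colorsAt_sup_edge_of_ne nuy' nxy', colorsAt_sup_edge_of_ne nuy' nx'y',
        colorsAt_sup_edge_of_ne nxy' nyy']
      exact hc₆) hc₅₆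
  exact ⟨_, _, h₃⟩

end IsTotalColoring

theorem HasTotalColoring.of_induce {G H : SimpleGraph V} {k : ℕ} [NeZero k] {T : Set V}
    (h : HasTotalColoring (G.induce T) k) (hle : H ≤ G) (hT : ∀ ⦃p q⦄, H.Adj p q → p ∈ T) :
    HasTotalColoring H k := by
  obtain ⟨cv, ce, hv, hee, hve⟩ := h
  have hval : Function.Injective (Sym2.map (Subtype.val : T → V)) :=
    Sym2.map.injective Subtype.val_injective
  have hlift : ∀ e ∈ H.edgeSet, ∃ e' ∈ (G.induce T).edgeSet, Sym2.map Subtype.val e' = e := by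
    rintro ⟨p, q⟩ hpq
    exact ⟨s(⟨p, hT hpq⟩, ⟨q, hT hpq.symm⟩), hle hpq, rfl⟩
  refine ⟨Function.extend Subtype.val cv 0, Function.extend (Sym2.map Subtype.val) ce 0,
    fun p q hpq => ?_, fun e f he' hf' hef ⟨w, hwe', hwf'⟩ => ?_, fun p e he' hpe => ?_⟩
  · lift p to T using hT hpq
    lift q to T using hT hpq.symm
    rw [Subtype.val_injective.extend_apply, Subtype.val_injective.extend_apply]
    exact hv (hle hpq)
  · obtain ⟨e, he, rfl⟩ := hlift e he'
    obtain ⟨f, hf, rfl⟩ := hlift f hf'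
    obtain ⟨w, hwe, rfl⟩ := Sym2.mem_map.1 hwe'
    obtain ⟨w', hwf, hw⟩ := Sym2.mem_map.1 hwf'
    rw [hval.extend_apply, hval.extend_apply]
    exact hee e f he hf (fun h => hef (h ▸ rfl)) ⟨w, hwe, Subtype.val_injective hw ▸ hwf⟩
  · obtain ⟨e, he, rfl⟩ := hlift e he'
    obtain ⟨p, hp, rfl⟩ := Sym2.mem_map.1 hpe
    rw [hval.extend_apply, Subtype.val_injective.extend_apply]
    exact hve p e he hp

theorem HasTotalColoring.of_deleteIncidenceSet {G : SimpleGraph V} [G.LocallyFinite] {k : ℕ}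
    (hk : 6 ≤ k) {x' u x v y w y' : V} (hnd : [x', u, x, v, y, w, y'].Nodup)
    (hu : ∀ q, G.Adj u q ↔ q = x' ∨ q = x) (hv : ∀ q, G.Adj v q ↔ q = x ∨ q = y)
    (hw : ∀ q, G.Adj w q ↔ q = y ∨ q = y') (hxy : G.Adj x y) (hx : G.degree x ≤ 5)
    (hy : G.degree y ≤ 5) (hx' : G.degree x' < k) (hy' : G.degree y' < k)
    (h : HasTotalColoring
      (((G.deleteIncidenceSet w).deleteIncidenceSet v).deleteIncidenceSet u) k) :
    HasTotalColoring G k := by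
  have hdist := hnd
  simp only [List.nodup_cons, List.mem_cons, List.not_mem_nil, List.nodup_nil, not_or,
    or_false, and_true, not_false_eq_true] at hdist
  obtain ⟨-, ⟨nux, nuv, nuy, -⟩, ⟨nxv, -, nxw, -⟩, ⟨nvy, nvw, -⟩, ⟨nyw, -⟩, -⟩ := hdist
  have hux' := (hu x').2 (.inl rfl)
  have hux := (hu x).2 (.inr rfl)
  have hvx := (hv x).2 (.inl rfl)
  have hvy := (hv y).2 (.inr rfl)
  have hwy := (hw y).2 (.inl rfl)
  have hwy' := (hw y').2 (.inr rfl)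
  rw [← deleteIncidenceSet_sup_path hnd hu hv hw]
  set H₀ := ((G.deleteIncidenceSet w).deleteIncidenceSet v).deleteIncidenceSet u
  have hxy₀ : H₀.Adj x y := by
    simp [H₀, deleteIncidenceSet_adj, hxy, nxv, nxw, nyw, Ne.symm nux, Ne.symm nuy, Ne.symm nvy]
  obtain ⟨cv, ce, hc⟩ := h
  have hle : H₀.deleteEdges {s(x, y)} ≤ G := (deleteEdges_le _).trans <|
    (deleteIncidenceSet_le _ _).trans <|
      (deleteIncidenceSet_le _ _).trans (deleteIncidenceSet_le _ _)
  rw [← deleteEdges_sup_edge hxy₀]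
  refine (hc.mono (deleteEdges_le _)).hasTotalColoring_sup_path hk hnd
    (by simp [H₀, deleteIncidenceSet_adj]) (by simp [H₀, deleteIncidenceSet_adj])
    (by simp [H₀, deleteIncidenceSet_adj]) ?_ ?_ ?_ ?_ (hc.1 hxy₀)
    (hc.ce_notMem_colorsAt_deleteEdges hxy₀ (Sym2.mem_mk_left _ _))
    (hc.ce_notMem_colorsAt_deleteEdges hxy₀ (Sym2.mem_mk_right _ _))
  · have := ncard_colorsAt_add_ncard_le (cv := cv) (ce := ce) hle (p := x) (D := {u, v, y})
      (by simp [Set.insert_subset_iff, hux.symm, hvx.symm, hxy])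
      (by simp [H₀, deleteIncidenceSet_adj])
    rw [Set.ncard_eq_three.2 ⟨u, v, y, nuv, nuy, nvy, rfl⟩] at this
    omega
  · have := ncard_colorsAt_add_ncard_le (cv := cv) (ce := ce) hle (p := y) (D := {v, w, x})
      (by simp [Set.insert_subset_iff, hvy.symm, hwy.symm, hxy.symm])
      (by simp [H₀, deleteIncidenceSet_adj])
    rw [Set.ncard_eq_three.2 ⟨v, w, x, nvw, Ne.symm nxv, Ne.symm nxw, rfl⟩] at this
    omega
  · have := ncard_colorsAt_add_ncard_le (cv := cv) (ce := ce) hle (p := x') (D := {u})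
      (by simp [hux'.symm]) (by simp [H₀, deleteIncidenceSet_adj])
    rw [Set.ncard_singleton] at this
    omega
  · have := ncard_colorsAt_add_ncard_le (cv := cv) (ce := ce) hle (p := y') (D := {w})
      (by simp [hwy'.symm]) (by simp [H₀, deleteIncidenceSet_adj])
    rw [Set.ncard_singleton] at this
    omega

end

theorem stmt_5_general {V : Type*} [Fintype V] (G : SimpleGraph V) [DecidableRel G.Adj]
    (x' u x v y w y' : V) (M : ℕ) (hM : 5 ≤ M) (hDelta : G.maxDegree ≤ M)
    (hnd : ([x', u, x, v, y, w, y'] : List V).Nodup)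
    (h1 : G.Adj x' u) (h2 : G.Adj u x) (h3 : G.Adj x v) (h4 : G.Adj v y)
    (h5 : G.Adj y w) (h6 : G.Adj w y')
    (h9 : G.Adj x y)
    (hdu : G.degree u = 2) (hdv : G.degree v = 2) (hdw : G.degree w = 2)
    (hdx : G.degree x = 5) (hdy : G.degree y = 5)
    (h : HasTotalColoring (G.induce ({u, v, w}ᶜ : Set V)) (M + 1)) :
    HasTotalColoring G (M + 1) := by
  have hdeg (p : V) : G.degree p < M + 1 :=
    ((G.degree_le_maxDegree p).trans hDelta).trans_lt M.lt_succ_self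
  refine .of_deleteIncidenceSet (by omega) hnd (adj_iff_of_degree_eq_two hdu h1.symm h2 ?_)
    (adj_iff_of_degree_eq_two hdv h3.symm h4 ?_) (adj_iff_of_degree_eq_two hdw h5.symm h6 ?_) h9
    hdx.le hdy.le (hdeg x') (hdeg y') (h.of_induce ((deleteIncidenceSet_le _ _).trans <|
      (deleteIncidenceSet_le _ _).trans (deleteIncidenceSet_le _ _)) fun p q hpq => ?_)
  · rintro rfl; simp at hnd
  · rintro rfl; simp at hnd
  · rintro rfl; simp at hnd
  · simp only [deleteIncidenceSet_adj] at hpq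
    simp [hpq.1.1.2.1, hpq.1.2.1, hpq.2.1]

theorem stmt_5 {V : Type*} [Fintype V] (G : SimpleGraph V) [DecidableRel G.Adj]
    (x' u x v y w y' : V) (M : ℕ) (hM : 5 ≤ M) (hDelta : G.maxDegree ≤ M)
    (hnd : ([x', u, x, v, y, w, y'] : List V).Nodup)
    (h1 : G.Adj x' u) (h2 : G.Adj u x) (h3 : G.Adj x v) (h4 : G.Adj v y)
    (h5 : G.Adj y w) (h6 : G.Adj w y')
    (h7 : G.Adj x x') (h8 : G.Adj y y') (h9 : G.Adj x y) (h10 : G.Adj x' y)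
    (h11 : G.Adj x y')
    (hdu : G.degree u = 2) (hdv : G.degree v = 2) (hdw : G.degree w = 2)
    (hdx : G.degree x = 5) (hdy : G.degree y = 5)
    (h : HasTotalColoring (G.induce ({u, v, w}ᶜ : Set V)) (M + 1)) :
    HasTotalColoring G (M + 1) :=
  stmt_5_general G x' u x v y w y' M hM hDelta hnd h1 h2 h3 h4 h5 h6 h9 hdu hdv hdw hdx hdy h
end

section
/- Let c be a proper total coloring of a graph G using color set U with |U| = M+1, M ≥ 5, and suppose uv is an uncolored edge with deg(u)=deg(v)=3, where u,x,v,y is a 4-cycle (edges ux, uy, vx, vy colored). If all M+1 colors appear among {c(u), c(v), c(ux), c(uy), c(vx), c(vy)} then M = 5; moreover, in that case one can recolor one of u or v and then color uv to obtain a proper total coloring of G. -/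
open SimpleGraph

/-! The six colours on `u`, `v`, `ux`, `uy`, `vx`, `vy` exhaust all `M + 1` colours, so `M = 5`
and they are pairwise distinct. Recolour `u` with a colour of one of `vx`, `vy` that neither `x`
nor `y` carries, and give `uv` the old colour of `u`. Properness gives `c(x) ≠ c(vx)` and
`c(y) ≠ c(vy)`, so this fails only when `c(x) = c(vy)` and `c(y) = c(vx)`; then recolouring `v`
with `c(ux)` works symmetrically. -/

theorem List.card_le_length_of_forall_mem {α : Type*} [Fintype α] [DecidableEq α]
    {l : List α} (hl : ∀ a, a ∈ l) : Fintype.card α ≤ l.length := by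
  calc Fintype.card α = l.toFinset.card := by
        rw [Finset.eq_univ_of_forall (s := l.toFinset) (by simpa using hl), Finset.card_univ]
    _ ≤ l.length := l.toFinset_card_le

theorem List.nodup_of_forall_mem_of_length_le_card {α : Type*} [Fintype α] [DecidableEq α]
    {l : List α} (hl : ∀ a, a ∈ l) (hlen : l.length ≤ Fintype.card α) : l.Nodup := by
  have huniv : l.toFinset = Finset.univ := Finset.eq_univ_of_forall (by simpa using hl)
  have hcard : l.toFinset.card = l.length := by
    refine le_antisymm l.toFinset_card_le ?_
    rwa [huniv, Finset.card_univ]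
  rw [← Multiset.coe_nodup, ← Multiset.toFinset_card_eq_card_iff_nodup]
  simpa using hcard

namespace SimpleGraph

variable {V : Type*} {G : SimpleGraph V}

theorem eq_or_eq_or_eq_of_adj_of_degree_eq_three {u x y z : V} [Fintype (G.neighborSet u)]
    (hx : G.Adj u x) (hy : G.Adj u y) (hz : G.Adj u z) (hxy : x ≠ y) (hxz : x ≠ z)
    (hyz : y ≠ z) (hd : G.degree u = 3) {w : V} (hw : G.Adj u w) :
    w = x ∨ w = y ∨ w = z := by
  classical
  have hsub : ({x, y, z} : Finset V) ⊆ G.neighborFinset u := by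
    simp [Finset.insert_subset_iff, hx, hy, hz]
  have hcard : (G.neighborFinset u).card ≤ ({x, y, z} : Finset V).card := by
    rw [card_neighborFinset_eq_degree, hd, Finset.card_insert_of_notMem (by simp [hxy, hxz]),
      Finset.card_pair hyz]
  have hmem : w ∈ ({x, y, z} : Finset V) := by
    rw [Finset.eq_of_subset_of_card_le hsub hcard]
    simpa using hw
  simpa using hmem

end SimpleGraph

open Function

namespace IsTotalColoring

variable {V : Type*} [DecidableEq V] {G : SimpleGraph V} {k : ℕ} {cv : V → Fin k}
  {ce : Sym2 V → Fin k} {u v : V} {α : Fin k}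

theorem update_of_deleteEdges (hc : IsTotalColoring (G.deleteEdges {s(u, v)}) k cv ce)
    (hαu : α ≠ cv u) (hα_adj : ∀ w, G.Adj u w → α ≠ cv w)
    (hα_edge : ∀ e ∈ G.edgeSet, u ∈ e → e ≠ s(u, v) → α ≠ ce e)
    (hu_edge : ∀ e ∈ G.edgeSet, v ∈ e → e ≠ s(u, v) → cv u ≠ ce e) (hu_v : cv u ≠ cv v) :
    IsTotalColoring G k (update cv u α) (update ce s(u, v) (cv u)) := by
  have hmem_delete : ∀ e ∈ G.edgeSet, e ≠ s(u, v) → e ∈ (G.deleteEdges {s(u, v)}).edgeSet := by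
    intro e he hne
    simp [edgeSet_deleteEdges, he, hne]
  have hu_meets : ∀ f ∈ G.edgeSet, f ≠ s(u, v) → (∃ w, w ∈ s(u, v) ∧ w ∈ f) →
      cv u ≠ ce f := by
    rintro f hf hne ⟨w, hw, hwf⟩
    rcases Sym2.mem_iff.mp hw with rfl | rfl
    exacts [hc.2.2 w f (hmem_delete f hf hne) hwf, hu_edge f hf hwf hne]
  refine ⟨fun a b hab => ?_, fun e f he hf hef hmeet => ?_, fun w e he hw => ?_⟩
  · rcases eq_or_ne a u with rfl | ha
    · rw [update_self, update_of_ne hab.ne']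
      exact hα_adj b hab
    rcases eq_or_ne b u with rfl | hb
    · rw [update_self, update_of_ne ha]
      exact (hα_adj a hab.symm).symm
    rw [update_of_ne ha, update_of_ne hb]
    exact hc.1 ((deleteEdges_adj ..).2 ⟨hab, by simp [ha, hb]⟩)
  · rcases eq_or_ne e s(u, v) with rfl | he'
    · rw [update_self, update_of_ne (Ne.symm hef)]
      exact hu_meets f hf (Ne.symm hef) hmeet
    rcases eq_or_ne f s(u, v) with rfl | hf'
    · obtain ⟨w, hwe, hwf⟩ := hmeet
      rw [update_self, update_of_ne he']
      exact (hu_meets e he he' ⟨w, hwf, hwe⟩).symm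
    rw [update_of_ne he', update_of_ne hf']
    exact hc.2.1 e f (hmem_delete e he he') (hmem_delete f hf hf') hef hmeet
  · rcases eq_or_ne e s(u, v) with rfl | he'
    · rw [update_self]
      rcases Sym2.mem_iff.mp hw with rfl | rfl
      · rwa [update_self]
      · rw [update_of_ne (G.ne_of_adj he).symm]
        exact hu_v.symm
    rw [update_of_ne he']
    rcases eq_or_ne w u with rfl | hwu
    · rw [update_self]
      exact hα_edge e he hw he'
    rw [update_of_ne hwu]
    exact hc.2.2 w e (hmem_delete e he he') hw

theorem update_of_deleteEdges_of_degree_eq_three {x y : V} [Fintype (G.neighborSet u)]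
    [Fintype (G.neighborSet v)] (hc : IsTotalColoring (G.deleteEdges {s(u, v)}) k cv ce)
    (hux : G.Adj u x) (huy : G.Adj u y) (hvx : G.Adj v x) (hvy : G.Adj v y) (huv : G.Adj u v)
    (hxy : x ≠ y) (hdu : G.degree u = 3) (hdv : G.degree v = 3)
    (hαu : α ≠ cv u) (hαv : α ≠ cv v) (hαx : α ≠ cv x) (hαy : α ≠ cv y)
    (hαux : α ≠ ce s(u, x)) (hαuy : α ≠ ce s(u, y))
    (hu_vx : cv u ≠ ce s(v, x)) (hu_vy : cv u ≠ ce s(v, y)) (hu_v : cv u ≠ cv v) :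
    IsTotalColoring G k (update cv u α) (update ce s(u, v) (cv u)) := by
  have hnbr_u {w} (hw : G.Adj u w) : w = x ∨ w = y ∨ w = v :=
    eq_or_eq_or_eq_of_adj_of_degree_eq_three hux huy huv hxy hvx.ne' hvy.ne' hdu hw
  have hnbr_v {w} (hw : G.Adj v w) : w = x ∨ w = y ∨ w = u :=
    eq_or_eq_or_eq_of_adj_of_degree_eq_three hvx hvy huv.symm hxy hux.ne' huy.ne' hdv hw
  refine hc.update_of_deleteEdges hαu (fun w hw => ?_) (fun e he hue hne => ?_)
    (fun e he hve hne => ?_) hu_v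
  · rcases hnbr_u hw with rfl | rfl | rfl <;> assumption
  · obtain ⟨w, rfl⟩ := Sym2.mem_iff_exists.mp hue
    rcases hnbr_u he with rfl | rfl | rfl
    exacts [hαux, hαuy, absurd rfl hne]
  · obtain ⟨w, rfl⟩ := Sym2.mem_iff_exists.mp hve
    rcases hnbr_v he with rfl | rfl | rfl
    exacts [hu_vx, hu_vy, absurd Sym2.eq_swap hne]

end IsTotalColoring

theorem exists_isTotalColoring_of_update {V : Type*} [DecidableEq V] {G : SimpleGraph V}
    {k : ℕ} {cv : V → Fin k} {ce : Sym2 V → Fin k} {u v w : V} {α c : Fin k} (huv : u ≠ v)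
    (hw : w = u ∨ w = v) (h : IsTotalColoring G k (update cv w α) (update ce s(u, v) c)) :
    ∃ (cv' : V → Fin k) (ce' : Sym2 V → Fin k),
      IsTotalColoring G k cv' ce' ∧
      (∀ z, z ≠ u → z ≠ v → cv' z = cv z) ∧
      (cv' u = cv u ∨ cv' v = cv v) ∧
      ∀ e ∈ (G.deleteEdges {s(u, v)}).edgeSet, ce' e = ce e := by
  refine ⟨_, _, h, fun z hzu hzv => ?_, ?_, fun e he => ?_⟩
  · rcases hw with rfl | rfl
    exacts [update_of_ne hzu .., update_of_ne hzv ..]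
  · rcases hw with rfl | rfl
    exacts [Or.inr (update_of_ne huv.symm ..), Or.inl (update_of_ne huv ..)]
  · simp only [edgeSet_deleteEdges, Set.mem_sdiff, Set.mem_singleton_iff] at he
    exact update_of_ne he.2 ..

theorem stmt_16 {V : Type*} [Fintype V] [DecidableEq V] (G : SimpleGraph V)
    [DecidableRel G.Adj] (u v x y : V) (M : ℕ) (hM : 5 ≤ M) (hxy : x ≠ y)
    (hux : G.Adj u x) (huy : G.Adj u y) (hvx : G.Adj v x) (hvy : G.Adj v y)
    (huv : G.Adj u v) (hdu : G.degree u = 3) (hdv : G.degree v = 3)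
    (cv : V → Fin (M + 1)) (ce : Sym2 V → Fin (M + 1))
    (hc : IsTotalColoring (G.deleteEdges {s(u, v)}) (M + 1) cv ce)
    (hall : ∀ a : Fin (M + 1),
      a ∈ ({cv u, cv v, ce s(u, x), ce s(u, y), ce s(v, x), ce s(v, y)} :
        Set (Fin (M + 1)))) :
    M = 5 ∧ ∃ (cv' : V → Fin (M + 1)) (ce' : Sym2 V → Fin (M + 1)),
      IsTotalColoring G (M + 1) cv' ce' ∧
      (∀ z, z ≠ u → z ≠ v → cv' z = cv z) ∧
      (cv' u = cv u ∨ cv' v = cv v) ∧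
      ∀ e ∈ (G.deleteEdges {s(u, v)}).edgeSet, ce' e = ce e := by
  have hcolors : ∀ a, a ∈ [cv u, cv v, ce s(u, x), ce s(u, y), ce s(v, x), ce s(v, y)] := by
    simpa using hall
  have hM5 : M = 5 := by
    have := List.card_le_length_of_forall_mem hcolors
    simp only [Fintype.card_fin, List.length_cons, List.length_nil] at this
    omega
  subst hM5
  have hnd := List.nodup_of_forall_mem_of_length_le_card hcolors (by simp)
  simp only [List.nodup_cons, List.mem_cons, List.not_mem_nil, or_false, not_or,
    List.nodup_nil, not_false_eq_true, and_true] at hnd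
  obtain ⟨⟨hu_v, hu_ux, hu_uy, hu_vx, hu_vy⟩, ⟨hv_ux, hv_uy, hv_vx, hv_vy⟩, ⟨-, hux_vx, hux_vy⟩, ⟨huy_vx, huy_vy⟩, -⟩ := hnd
  have hx_vx : cv x ≠ ce s(v, x) :=
    hc.2.2 x _ (by simp [edgeSet_deleteEdges, hvx, hux.ne', huv.ne']) (Sym2.mem_mk_right _ _)
  have hy_vy : cv y ≠ ce s(v, y) :=
    hc.2.2 y _ (by simp [edgeSet_deleteEdges, hvy, huy.ne', huv.ne']) (Sym2.mem_mk_right _ _)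
  refine ⟨rfl, ?_⟩
  by_cases hy_vx : cv y = ce s(v, x)
  · by_cases hx_vy : cv x = ce s(v, y)
    · have hc' : IsTotalColoring (G.deleteEdges {s(v, u)}) 6 cv ce := by rwa [Sym2.eq_swap]
      have := hc'.update_of_deleteEdges_of_degree_eq_three hvx hvy hux huy huv.symm hxy hdv hdu
        (Ne.symm hv_ux) (Ne.symm hu_ux) (hx_vy ▸ hux_vy) (hy_vx ▸ hux_vx) hux_vx hux_vy hv_ux hv_uy (Ne.symm hu_v)
      rw [show s(v, u) = s(u, v) from Sym2.eq_swap] at this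
      exact exists_isTotalColoring_of_update huv.ne (Or.inr rfl) this
    · exact exists_isTotalColoring_of_update huv.ne (Or.inl rfl)
        (hc.update_of_deleteEdges_of_degree_eq_three hux huy hvx hvy huv hxy hdu hdv
          (Ne.symm hu_vy) (Ne.symm hv_vy) (Ne.symm hx_vy) (Ne.symm hy_vy) (Ne.symm hux_vy) (Ne.symm huy_vy)
          hu_vx hu_vy hu_v)
  · exact exists_isTotalColoring_of_update huv.ne (Or.inl rfl)
      (hc.update_of_deleteEdges_of_degree_eq_three hux huy hvx hvy huv hxy hdu hdv
        (Ne.symm hu_vx) (Ne.symm hv_vx) (Ne.symm hx_vx) (Ne.symm hy_vx) (Ne.symm hux_vx) (Ne.symm huy_vx)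
        hu_vx hu_vy hu_v)
end
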